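/- arXiv:2204.04594 — 10 statements merged into one kernel-verified Lean document; each statement's English description precedes it below -/
import Mathlib

section
/- Let G and H be Polish groups. If there is a topological group embedding of G onto a closed subgroup of H (i.e., an injective continuous group homomorphism G → H with closed range which is a homeomorphism onto its image), then E(G) is Borel reducible to E(H). -/
open Filter Topology

/-- `E(G)`: the equivalence relation on `G^ω = ℕ → G` relating `x` and `y` iff
the sequence `n ↦ x n * (y n)⁻¹` converges in `G`. -/
def ERel (G : Type*) [Group G] [TopologicalSpace G] (x y : ℕ → G) : Prop :=
  ∃ g : G, Tendsto (fun n => x n * (y n)⁻¹) atTop (𝓝 g)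

/-- Borel reducibility of binary relations on topological spaces, with respect to
the Borel σ-algebras of the topologies. -/
def BorelReducible {X Y : Type*} [TopologicalSpace X] [TopologicalSpace Y]
    (E : X → X → Prop) (F : Y → Y → Prop) : Prop :=
  ∃ θ : X → Y, @Measurable X Y (borel X) (borel Y) θ ∧ ∀ x y, (E x y ↔ F (θ x) (θ y))

theorem Topology.IsClosedEmbedding.exists_tendsto_comp_iff {X Y ι : Type*} [TopologicalSpace X]
    [TopologicalSpace Y] {f : X → Y} (hf : IsClosedEmbedding f) {l : Filter ι} [l.NeBot]
    {u : ι → X} : (∃ b, Tendsto (f ∘ u) l (𝓝 b)) ↔ ∃ a, Tendsto u l (𝓝 a) := by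
  constructor
  · rintro ⟨b, hb⟩
    obtain ⟨a, rfl⟩ : b ∈ Set.range f :=
      hf.isClosed_range.mem_of_tendsto hb (Eventually.of_forall fun _ => Set.mem_range_self _)
    exact ⟨a, hf.isInducing.tendsto_nhds_iff.mpr hb⟩
  · rintro ⟨a, ha⟩
    exact ⟨f a, (hf.continuous.tendsto a).comp ha⟩

theorem ERel_comp_iff_of_isClosedEmbedding {G H : Type*} [Group G] [TopologicalSpace G] [Group H]
    [TopologicalSpace H] {φ : G →* H} (hφ : IsClosedEmbedding φ) (x y : ℕ → G) :
    ERel H (φ ∘ x) (φ ∘ y) ↔ ERel G x y := by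
  have hcomp : (fun n => (φ ∘ x) n * ((φ ∘ y) n)⁻¹) = φ ∘ fun n => x n * (y n)⁻¹ := by
    funext n
    simp
  rw [ERel, ERel, hcomp]
  exact hφ.exists_tendsto_comp_iff

theorem stmt0_general {G H : Type*} [Group G] [TopologicalSpace G]
    [Group H] [TopologicalSpace H]
    (φ : G →* H) (hφ : Topology.IsClosedEmbedding φ) :
    BorelReducible (ERel G) (ERel H) := by
  have hcont : Continuous fun x : ℕ → G => φ ∘ x :=
    continuous_pi fun n => hφ.continuous.comp (continuous_apply n)
  exact ⟨fun x => φ ∘ x, hcont.borel_measurable,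
    fun x y => (ERel_comp_iff_of_isClosedEmbedding hφ x y).symm⟩

/-- If a Polish group `G` embeds as a topological group onto a closed subgroup of a
Polish group `H`, then `E(G) ≤_B E(H)`. -/
theorem stmt0 {G H : Type*} [Group G] [TopologicalSpace G] [IsTopologicalGroup G] [PolishSpace G]
    [Group H] [TopologicalSpace H] [IsTopologicalGroup H] [PolishSpace H]
    (φ : G →* H) (hφ : Topology.IsClosedEmbedding φ) :
    BorelReducible (ERel G) (ERel H) :=
  stmt0_general φ hφ
end

section
/- Let G be a countable discrete group containing at least two elements. Then E(G) is Borel bireducible with E_0, i.e., E(G) ≤_B E_0 and E_0 ≤_B E(G). -/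
open Filter Topology

/-- The eventual-equality relation `E₀` on `2^ω`. -/
def E0 (x y : ℕ → Bool) : Prop := ∀ᶠ n in atTop, x n = y n

/-!
For discrete `G`, a sequence converges iff it is eventually constant, and
`x n * (y n)⁻¹` is eventually constant iff the increment sequences `n ↦ (x n)⁻¹ * x (n + 1)` and
`n ↦ (y n)⁻¹ * y (n + 1)` are eventually equal. So `E(G)` is eventual equality of sequences in the
countable set `G`, which is coded into `E₀` by recording the graph of a sequence `ℕ → ℕ` as a
subset of `ℕ × ℕ ≃ ℕ`. Conversely, interleaving a sequence with `1` turns eventual equality into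
`E(G)`, and a pair `1 ≠ a` embeds `Bool` into `G`.
-/

namespace BorelReducible

variable {X Y Z : Type*} [TopologicalSpace X] [TopologicalSpace Y] [TopologicalSpace Z]
  {E : X → X → Prop} {F : Y → Y → Prop} {H : Z → Z → Prop}

theorem of_continuous {θ : X → Y} (hθ : Continuous θ) (h : ∀ x y, E x y ↔ F (θ x) (θ y)) :
    BorelReducible E F :=
  ⟨θ, hθ.borel_measurable, h⟩

theorem trans (hEF : BorelReducible E F) (hFH : BorelReducible F H) : BorelReducible E H := by
  obtain ⟨θ, hθ, hθE⟩ := hEF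
  obtain ⟨η, hη, hηF⟩ := hFH
  exact ⟨η ∘ θ, hη.comp hθ, fun x y => (hθE x y).trans (hηF _ _)⟩

end BorelReducible

theorem eventually_cofinite_comp_equiv {α β : Type*} (e : α ≃ β) {p : β → Prop} :
    (∀ᶠ a in cofinite, p (e a)) ↔ ∀ᶠ b in cofinite, p b := by
  simp only [eventually_cofinite]
  exact ⟨fun h => Set.Finite.of_preimage (f := e) (s := {b | ¬p b}) h e.surjective,
    fun h => Set.Finite.preimage (f := e) e.injective.injOn h⟩

theorem exists_eventually_eq_iff_eventually_succ {α : Type*} (u : ℕ → α) :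
    (∃ g, ∀ᶠ n in atTop, u n = g) ↔ ∀ᶠ n in atTop, u (n + 1) = u n := by
  constructor
  · rintro ⟨g, hg⟩
    filter_upwards [hg, (tendsto_add_atTop_nat 1).eventually hg] with n hn hn1
    rw [hn, hn1]
  · intro h
    obtain ⟨N, hN⟩ := eventually_atTop.1 h
    refine ⟨u N, eventually_atTop.2 ⟨N, fun n hn => ?_⟩⟩
    induction n, hn using Nat.le_induction with
    | base => rfl
    | succ n hn ih => rw [hN n hn, ih]

theorem Function.Injective.eventuallyEq_comp_iff {α β γ : Type*} {l : Filter α} {f : β → γ}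
    (hf : Function.Injective f) {u v : α → β} : f ∘ u =ᶠ[l] f ∘ v ↔ u =ᶠ[l] v :=
  eventually_congr (Eventually.of_forall fun _ => hf.eq_iff)

def graphIndicator {ι β : Type*} [DecidableEq β] (u : ι → β) (p : ι × β) : Bool :=
  decide (u p.1 = p.2)

theorem graphIndicator_eventuallyEq_cofinite_iff {ι β : Type*} [DecidableEq β] {u v : ι → β} :
    graphIndicator u =ᶠ[cofinite] graphIndicator v ↔ u =ᶠ[cofinite] v := by
  simp only [EventuallyEq, eventually_cofinite]
  constructor
  · refine fun h => (h.preimage (f := fun i => (i, u i))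
      fun i _ j _ hij => congrArg Prod.fst hij).subset ?_
    intro i hi
    simpa [graphIndicator, eq_comm] using hi
  · intro h
    refine ((h.image fun i => (i, u i)).union (h.image fun i => (i, v i))).subset ?_
    rintro ⟨i, b⟩ hib
    by_cases hu : u i = b <;> by_cases hv : v i = b <;>
      simp_all [graphIndicator, eq_comm]

theorem mul_inv_eq_mul_inv_iff_inv_mul_eq_inv_mul {G : Type*} [Group G] {a b c d : G} :
    a * b⁻¹ = c * d⁻¹ ↔ a⁻¹ * c = b⁻¹ * d := by
  rw [mul_inv_eq_iff_eq_mul, mul_assoc, ← inv_mul_eq_iff_eq_mul, ← inv_inj, mul_inv_rev, inv_inv,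
    mul_inv_rev, inv_inv]

section Discrete

variable {G : Type*} [Group G] [TopologicalSpace G] [DiscreteTopology G]

theorem eRel_iff_exists_eventually_eq {x y : ℕ → G} :
    ERel G x y ↔ ∃ g, ∀ᶠ n in atTop, x n * (y n)⁻¹ = g := by
  simp only [ERel, nhds_discrete, tendsto_pure]

theorem eRel_iff_eventuallyEq_increments {x y : ℕ → G} :
    ERel G x y ↔
      (fun n => (x n)⁻¹ * x (n + 1)) =ᶠ[atTop] fun n => (y n)⁻¹ * y (n + 1) := by
  rw [eRel_iff_exists_eventually_eq, exists_eventually_eq_iff_eventually_succ]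
  exact eventually_congr (Eventually.of_forall fun n =>
    eq_comm.trans mul_inv_eq_mul_inv_iff_inv_mul_eq_inv_mul)

theorem eRel_interleave_one_iff {u v : ℕ → G} :
    ERel G (fun n => if Even n then 1 else u (n / 2)) (fun n => if Even n then 1 else v (n / 2)) ↔
      u =ᶠ[atTop] v := by
  rw [eRel_iff_exists_eventually_eq]
  constructor
  · rintro ⟨g, hg⟩
    obtain ⟨N, hN⟩ := eventually_atTop.1 hg
    have hg1 : g = 1 := by simpa using (hN (2 * N) (by omega)).symm
    refine eventually_atTop.2 ⟨N, fun k hk => ?_⟩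
    have hodd := hN (2 * k + 1) (by omega)
    have hhalf : (2 * k + 1) / 2 = k := by omega
    simpa [hhalf, hg1, mul_inv_eq_one] using hodd
  · intro h
    refine ⟨1, eventually_atTop.2 ?_⟩
    obtain ⟨N, hN⟩ := eventually_atTop.1 h
    refine ⟨2 * N, fun n hn => ?_⟩
    by_cases hn2 : Even n
    · simp [hn2]
    · simp [hn2, hN (n / 2) (by omega)]

end Discrete

section Reductions

variable (G : Type*) [Group G] [TopologicalSpace G] [DiscreteTopology G]

theorem borelReducible_eRel_eventuallyEq :
    BorelReducible (ERel G) fun x y : ℕ → G => x =ᶠ[atTop] y :=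
  .of_continuous (θ := fun x n => (x n)⁻¹ * x (n + 1))
    (continuous_pi fun n =>
      (continuous_of_discreteTopology (f := fun p : G × G => p.1⁻¹ * p.2)).comp
        (f := fun x : ℕ → G => (x n, x (n + 1))) (by fun_prop))
    fun _ _ => eRel_iff_eventuallyEq_increments

theorem borelReducible_eventuallyEq_eRel :
    BorelReducible (fun x y : ℕ → G => x =ᶠ[atTop] y) (ERel G) :=
  .of_continuous (θ := fun u n => if Even n then 1 else u (n / 2))
    (continuous_pi fun n => by
      by_cases hn : Even n
      · simpa [hn] using continuous_const
      · simpa [hn] using continuous_apply (n / 2))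
    fun _ _ => eRel_interleave_one_iff.symm

end Reductions

theorem borelReducible_eventuallyEq_of_injective {α β : Type*} [TopologicalSpace α]
    [DiscreteTopology α] [TopologicalSpace β] {f : α → β} (hf : Function.Injective f) :
    BorelReducible (fun x y : ℕ → α => x =ᶠ[atTop] y) fun x y : ℕ → β => x =ᶠ[atTop] y :=
  .of_continuous (θ := (f ∘ ·)) (continuous_pi fun n =>
      (continuous_of_discreteTopology (f := f)).comp (continuous_apply n))
    fun _ _ => hf.eventuallyEq_comp_iff.symm

theorem borelReducible_eventuallyEq_nat_e0 :
    BorelReducible (fun x y : ℕ → ℕ => x =ᶠ[atTop] y) E0 := by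
  refine .of_continuous (θ := fun u n => graphIndicator u (Nat.unpair n))
    (continuous_pi fun n => (continuous_of_discreteTopology
      (f := fun k : ℕ => decide (k = n.unpair.2))).comp (continuous_apply n.unpair.1))
    fun u v => ?_
  change _ ↔ _ =ᶠ[atTop] _
  rw [← Nat.cofinite_eq_atTop, ← graphIndicator_eventuallyEq_cofinite_iff, EventuallyEq]
  exact (eventually_cofinite_comp_equiv Nat.pairEquiv.symm).symm

theorem stmt1_general {G : Type*} [Group G] [TopologicalSpace G]
    [Countable G] [DiscreteTopology G] [Nontrivial G] :
    BorelReducible (ERel G) E0 ∧ BorelReducible E0 (ERel G) := by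
  obtain ⟨f, hf⟩ := exists_injective_nat G
  obtain ⟨a, ha⟩ := exists_ne (1 : G)
  have hbool : Function.Injective fun b : Bool => if b then a else 1 := by
    intro b c; cases b <;> cases c <;> simp [ha, ha.symm]
  exact ⟨(borelReducible_eRel_eventuallyEq G).trans <|
      (borelReducible_eventuallyEq_of_injective hf).trans borelReducible_eventuallyEq_nat_e0,
    (borelReducible_eventuallyEq_of_injective hbool).trans (borelReducible_eventuallyEq_eRel G)⟩

/-- For a countable discrete group `G` with at least two elements,
`E(G)` is Borel bireducible with `E₀`. -/
theorem stmt1 {G : Type*} [Group G] [TopologicalSpace G] [IsTopologicalGroup G]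
    [Countable G] [DiscreteTopology G] [Nontrivial G] :
    BorelReducible (ERel G) E0 ∧ BorelReducible E0 (ERel G) :=
  stmt1_general
end

section
/- Let G be an uncountable Polish group. Then E_0^ω is Borel reducible to E(G). -/
open Filter Topology

/-- The countable power `E₀^ω` on `(2^ω)^ω`. -/
def E0omega (x y : ℕ → ℕ → Bool) : Prop := ∀ k, E0 (x k) (y k)

theorem nhdsNE_one_neBot {G : Type*} [Group G] [TopologicalSpace G] [IsTopologicalGroup G]
    [TopologicalSpace.SeparableSpace G] [Uncountable G] : (𝓝[≠] (1 : G)).NeBot := by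
  rw [neBot_iff, Ne, ← isOpen_singleton_iff_punctured_nhds]
  intro h
  have := discreteTopology_of_isOpen_singleton_one h
  exact not_countable (TopologicalSpace.separableSpace_iff_countable.1 ‹_›)

theorem exists_seq_ne_one_tendsto_one {G : Type*} [Group G] [TopologicalSpace G]
    [IsTopologicalGroup G] [TopologicalSpace.SeparableSpace G] [FirstCountableTopology G]
    [Uncountable G] :
    ∃ a : ℕ → G, (∀ n, a n ≠ 1) ∧ Tendsto a atTop (𝓝 1) := by
  have := nhdsNE_one_neBot (G := G)
  obtain ⟨u, hu⟩ := exists_seq_tendsto (𝓝[≠] (1 : G))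
  obtain ⟨hu1, hne⟩ := tendsto_nhdsWithin_iff.1 hu
  obtain ⟨N, hN⟩ := eventually_atTop.1 hne
  exact ⟨fun n => u (n + N), fun n => hN _ (Nat.le_add_left _ _),
    hu1.comp (tendsto_add_atTop_nat N)⟩

theorem Nat.tendsto_atTop_iff_tendsto_cofinite_pair {X : Type*} {f : ℕ → X} {l : Filter X} :
    Tendsto f atTop l ↔ Tendsto (fun p : ℕ × ℕ => f (Nat.pair p.1 p.2)) cofinite l := by
  rw [← Nat.cofinite_eq_atTop]
  refine ⟨fun h => h.comp Nat.pairEquiv.injective.tendsto_cofinite, fun h => ?_⟩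
  simpa [Function.comp_def] using h.comp Nat.pairEquiv.symm.injective.tendsto_cofinite

section
variable {G : Type*} [Group G] [TopologicalSpace G] [ContinuousInv G] {a : ℕ → G}

theorem tendsto_one_of_forall_eq_one_or_eq_or_eq_inv {ι : Type*} {l : Filter ι} {b v : ι → G}
    (hb : Tendsto b l (𝓝 1)) (hv : ∀ i, v i = 1 ∨ v i = b i ∨ v i = (b i)⁻¹) :
    Tendsto v l (𝓝 1) := by
  have hb_inv : Tendsto (fun i => (b i)⁻¹) l (𝓝 1) := by simpa using hb.inv
  refine fun U hU => mem_map.2 ?_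
  filter_upwards [hb.eventually_mem hU, hb_inv.eventually_mem hU] with i hbU hb_invU
  rcases hv i with h | h | h <;> simp only [Set.mem_preimage, h, mem_of_mem_nhds hU, hbU, hb_invU]

variable {w : ℕ × ℕ → G}

theorem tendsto_cofinite_one_of_eventually_eq_one (ha : Tendsto a atTop (𝓝 1))
    (hw : ∀ k n, w (k, n) = 1 ∨ w (k, n) = a k ∨ w (k, n) = (a k)⁻¹)
    (h : ∀ k, ∀ᶠ n in atTop, w (k, n) = 1) : Tendsto w cofinite (𝓝 1) := by
  refine fun U hU => mem_map.2 ?_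
  have hfar : Tendsto w (comap Prod.fst atTop) (𝓝 1) :=
    tendsto_one_of_forall_eq_one_or_eq_or_eq_inv (ha.comp tendsto_comap) fun p => hw p.1 p.2
  obtain ⟨t, ht, htU⟩ := mem_comap.1 (hfar hU)
  obtain ⟨K, hK⟩ := mem_atTop_sets.1 ht
  have hnear : ∀ k, {n | w (k, n) ≠ 1}.Finite := fun k => by
    simpa only [← Nat.cofinite_eq_atTop, eventually_cofinite] using h k
  refine ((Set.finite_Iio K).biUnion fun k _ => (Set.finite_singleton k).prod (hnear k)).subset ?_
  rintro ⟨k, n⟩ hkn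
  have hk : k < K := by
    by_contra! hk
    exact hkn (htU (hK k hk))
  refine Set.mem_biUnion hk ⟨rfl, fun hw1 => hkn ?_⟩
  simp only [Set.mem_preimage, hw1, mem_of_mem_nhds hU]

theorem eventually_eq_one_of_tendsto_cofinite [T2Space G] (ha₁ : ∀ k, a k ≠ 1)
    (ha : Tendsto a atTop (𝓝 1))
    (hw : ∀ k n, w (k, n) = 1 ∨ w (k, n) = a k ∨ w (k, n) = (a k)⁻¹) {g : G}
    (hg : Tendsto w cofinite (𝓝 g)) (k : ℕ) : ∀ᶠ n in atTop, w (k, n) = 1 := by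
  have hcol : Tendsto (fun k => w (k, 0)) atTop (𝓝 g) := by
    rw [← Nat.cofinite_eq_atTop]
    exact hg.comp (Prod.mk_left_injective 0).tendsto_cofinite
  obtain rfl : g = 1 := tendsto_nhds_unique hcol
    (tendsto_one_of_forall_eq_one_or_eq_or_eq_inv ha fun k => hw k 0)
  have hrow : Tendsto (fun n => w (k, n)) atTop (𝓝 1) := by
    rw [← Nat.cofinite_eq_atTop]
    exact hg.comp (Prod.mk_right_injective k).tendsto_cofinite
  have hnot : ({a k, (a k)⁻¹} : Set G)ᶜ ∈ 𝓝 1 := by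
    refine ((Set.toFinite _).isClosed.isOpen_compl).mem_nhds ?_
    simpa [eq_comm, inv_eq_one] using (ha₁ k).symm
  filter_upwards [hrow hnot] with n hn
  rcases hw k n with h | h | h <;> simp_all

theorem exists_tendsto_cofinite_iff_eventually_eq_one [T2Space G] (ha₁ : ∀ k, a k ≠ 1)
    (ha : Tendsto a atTop (𝓝 1))
    (hw : ∀ k n, w (k, n) = 1 ∨ w (k, n) = a k ∨ w (k, n) = (a k)⁻¹) :
    (∃ g, Tendsto w cofinite (𝓝 g)) ↔ ∀ k, ∀ᶠ n in atTop, w (k, n) = 1 :=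
  ⟨fun ⟨_, hg⟩ => eventually_eq_one_of_tendsto_cofinite ha₁ ha hw hg,
    fun h => ⟨1, tendsto_cofinite_one_of_eventually_eq_one ha hw h⟩⟩

end

def e0omegaReduction {G : Type*} [One G] (a : ℕ → G) (x : ℕ → ℕ → Bool) (m : ℕ) : G :=
  if x m.unpair.1 m.unpair.2 then a m.unpair.1 else 1

theorem continuous_e0omegaReduction {G : Type*} [One G] [TopologicalSpace G] (a : ℕ → G) :
    Continuous (e0omegaReduction a) :=
  continuous_pi fun m => (continuous_of_discreteTopology (f := fun b : Bool =>
    if b then a m.unpair.1 else 1)).comp ((continuous_apply _).comp (continuous_apply _))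

theorem e0omegaReduction_mul_inv_pair {G : Type*} [Group G] (a : ℕ → G) (x y : ℕ → ℕ → Bool)
    (k n : ℕ) :
    e0omegaReduction a x (Nat.pair k n) * (e0omegaReduction a y (Nat.pair k n))⁻¹ =
      if x k n = y k n then 1 else if x k n then a k else (a k)⁻¹ := by
  simp only [e0omegaReduction, Nat.unpair_pair]
  cases x k n <;> cases y k n <;> simp

/-- For an uncountable Polish group `G`, `E₀^ω ≤_B E(G)`. -/
theorem stmt2 {G : Type*} [Group G] [TopologicalSpace G] [IsTopologicalGroup G] [PolishSpace G]
    [Uncountable G] :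
    BorelReducible E0omega (ERel G) := by
  obtain ⟨a, ha₁, ha⟩ := exists_seq_ne_one_tendsto_one (G := G)
  refine ⟨e0omegaReduction a, (continuous_e0omegaReduction a).borel_measurable, fun x y => ?_⟩
  set w : ℕ × ℕ → G := fun p =>
    e0omegaReduction a x (Nat.pair p.1 p.2) * (e0omegaReduction a y (Nat.pair p.1 p.2))⁻¹
  have hw : ∀ k n, w (k, n) = 1 ∨ w (k, n) = a k ∨ w (k, n) = (a k)⁻¹ := fun k n => by
    simp only [w, e0omegaReduction_mul_inv_pair]
    split_ifs <;> simp
  have hw₁ : ∀ k n, w (k, n) = 1 ↔ x k n = y k n := fun k n => by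
    simp only [w, e0omegaReduction_mul_inv_pair]
    split_ifs <;> simp_all
  simp only [ERel, Nat.tendsto_atTop_iff_tendsto_cofinite_pair]
  rw [exists_tendsto_cofinite_iff_eventually_eq_one ha₁ ha hw]
  simp only [hw₁, E0omega, E0]
end

section
/- Let G be a non-archimedean Polish group. Then E(G) is Borel reducible to =⁺. -/
open Filter Topology

/-- A topological group is non-archimedean if every neighborhood of the identity
contains an open subgroup. -/
def NonArchGroup (G : Type*) [Group G] [TopologicalSpace G] : Prop :=
  ∀ U ∈ 𝓝 (1 : G), ∃ V : Subgroup G, IsOpen (V : Set G) ∧ (V : Set G) ⊆ U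

/-- The relation `=⁺` on `(ℕ^ℕ)^ω`: two sequences are related iff they enumerate
the same set. -/
def EqPlus (x y : ℕ → ℕ → ℕ) : Prop := Set.range x = Set.range y

/-!
Fix open subgroups `V m` forming a basis at `1` and a dense sequence `d`; `code m g` indexes the
right coset `V m * g`, and `g ↦ (code m g)ₘ` embeds `G` into Baire space. The reduction sends `x`
to an enumeration of all sequences eventually equal to some `n ↦ code m (d i * x n)`, so `=⁺`
holds iff for all `m, i` there is `i'` with `d i * x n * (y n)⁻¹ * (d i')⁻¹ ∈ V m` for large `n`,
and symmetrically. This follows from convergence of `z n = x n * (y n)⁻¹`, and conversely it makes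
`z` Cauchy for both the left and the right uniformity. Such a sequence converges in a Polish
group: right translation by its would-be limit is a homeomorphism of the closure of the coded copy
of `G`, in which `G` is comeagre, so by Baire some `u` is sent to some `v` in `G`, and then
`u * z n → v`.
-/

open Set

section Germs

variable {β : Type*}

def patch (l : List β) (s : ℕ → β) : ℕ → β := fun k => l.getD k (s k)

theorem patch_eventuallyEq (l : List β) (s : ℕ → β) : patch l s =ᶠ[atTop] s :=
  eventually_atTop.2 ⟨l.length, fun _ hk => List.getD_eq_default _ _ hk⟩

theorem exists_patch_eq_of_eventuallyEq {η s : ℕ → β} (h : η =ᶠ[atTop] s) :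
    ∃ l, patch l s = η := by
  obtain ⟨N, hN⟩ := eventually_atTop.1 h
  refine ⟨(List.range N).map η, funext fun k => ?_⟩
  rcases lt_or_ge k N with hk | hk
  · simp [patch, hk]
  · simp [patch, hk, hN k hk]

def enumGerms {α : Type*} [Denumerable α] [Denumerable β] (f : α → ℕ → β) : ℕ → ℕ → β :=
  fun p => patch (Denumerable.ofNat (α × List β) p).2 (f (Denumerable.ofNat (α × List β) p).1)

theorem range_enumGerms {α : Type*} [Denumerable α] [Denumerable β] (f : α → ℕ → β) :
    range (enumGerms f) = {η | ∃ a, η =ᶠ[atTop] f a} := by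
  ext η
  constructor
  · rintro ⟨p, rfl⟩
    exact ⟨_, patch_eventuallyEq _ _⟩
  · rintro ⟨a, ha⟩
    obtain ⟨l, rfl⟩ := exists_patch_eq_of_eventuallyEq ha
    exact ⟨Encodable.encode (a, l), by simp [enumGerms]⟩

end Germs

theorem setOf_exists_eventuallyEq_subset_iff {ι ι' α β : Type*} {l : Filter α}
    {f : ι → α → β} {g : ι' → α → β} :
    {η | ∃ a, η =ᶠ[l] f a} ⊆ {η | ∃ b, η =ᶠ[l] g b} ↔ ∀ a, ∃ b, f a =ᶠ[l] g b :=
  ⟨fun h a => h ⟨a, EventuallyEq.rfl⟩, fun h _ ⟨a, ha⟩ => (h a).imp fun _ hb => ha.trans hb⟩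

theorem exists_tendsto_of_eventually_eq_prod {α : Type*} [TopologicalSpace α] {f : ℕ → α}
    (h : ∀ᶠ p in atTop ×ˢ atTop, f p.1 = f p.2) : ∃ r, Tendsto f atTop (𝓝 r) := by
  rw [prod_atTop_atTop_eq] at h
  obtain ⟨N, hN⟩ := eventually_atTop_prod_self.1 h
  exact ⟨f N, tendsto_const_nhds.congr' (eventually_atTop.2 ⟨N, fun n hn => hN N n le_rfl hn⟩)⟩

section Residual

variable {X Y : Type*} [MetricSpace X] [CompleteSpace X] [TopologicalSpace Y]
  [T2Space Y] [FirstCountableTopology Y]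

theorem mem_range_of_forall_exists_isOpen_dist_le {f : X → Y} (hf : Continuous f) {q : Y}
    (hq : q ∈ closure (range f))
    (h : ∀ k : ℕ, ∃ U, IsOpen U ∧ q ∈ U ∧ ∀ a ∈ f ⁻¹' U, ∀ b ∈ f ⁻¹' U, dist a b ≤ (1 / 2 : ℝ) ^ k) :
    q ∈ range f := by
  choose U hUo hqU hU using h
  obtain ⟨B, hB⟩ := (𝓝 q).exists_antitone_basis
  have hW : ∀ k, B k ∩ ⋂ j ∈ Iic k, U j ∈ 𝓝 q := fun k =>
    inter_mem (hB.mem k) ((biInter_mem (finite_Iic k)).2 fun j _ => (hUo j).mem_nhds (hqU j))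
  have : ∀ k, ∃ x, f x ∈ B k ∩ ⋂ j ∈ Iic k, U j := fun k => by
    obtain ⟨_, hy, x, rfl⟩ := mem_closure_iff_nhds.1 hq _ (hW k)
    exact ⟨x, hy⟩
  choose u hu using this
  have hUu : ∀ j k, j ≤ k → f (u k) ∈ U j := fun j k hjk => mem_iInter₂.1 (hu k).2 j hjk
  have hcauchy : CauchySeq u := cauchySeq_of_le_geometric (1 / 2) 1 (by norm_num) fun n => by
    simpa using hU n (u n) (hUu n n le_rfl) (u (n + 1)) (hUu n (n + 1) n.le_succ)
  obtain ⟨v, hv⟩ := cauchySeq_tendsto_of_complete hcauchy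
  exact ⟨v, tendsto_nhds_unique ((hf.tendsto v).comp hv) (hB.tendsto fun k => (hu k).1)⟩

theorem Topology.IsInducing.range_mem_residual_closure {f : X → Y} (hf : IsInducing f) :
    {p : closure (range f) | (p : Y) ∈ range f} ∈ residual (closure (range f)) := by
  let O : ℕ → Set Y := fun k =>
    ⋃₀ {U | IsOpen U ∧ ∀ a ∈ f ⁻¹' U, ∀ b ∈ f ⁻¹' U, dist a b ≤ (1 / 2 : ℝ) ^ k}
  have range_subset : ∀ k, range f ⊆ O k := by
    rintro k _ ⟨x, rfl⟩
    have hball : Metric.ball x ((1 / 2 : ℝ) ^ k / 2) ∈ comap f (𝓝 (f x)) :=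
      hf.nhds_eq_comap x ▸ Metric.ball_mem_nhds x (by positivity)
    obtain ⟨s, hs, hsub⟩ := mem_comap.1 hball
    obtain ⟨U, hUs, hUo, hxU⟩ := mem_nhds_iff.1 hs
    refine ⟨U, ⟨hUo, fun a ha b hb => ?_⟩, hxU⟩
    linarith [Metric.mem_ball.1 (hsub (hUs ha)), Metric.mem_ball.1 (hsub (hUs hb)),
      dist_triangle_right a b x]
  have hO : ∀ k, Subtype.val ⁻¹' O k ∈ residual (closure (range f)) := fun k =>
    residual_of_dense_open ((isOpen_sUnion fun U hU => hU.1).preimage continuous_subtype_val)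
      (IsInducing.subtypeVal.dense_iff.2 fun p => by
        rw [Subtype.image_preimage_coe]
        exact closure_mono (subset_inter subset_closure (range_subset k)) p.2)
  filter_upwards [countable_iInter_mem.2 hO] with p hp
  refine mem_range_of_forall_exists_isOpen_dist_le hf.continuous p.2 fun k => ?_
  obtain ⟨U, ⟨hUo, hU⟩, hpU⟩ := mem_iInter.1 hp k
  exact ⟨U, hUo, hpU, hU⟩

end Residual

def IsRightCauchy {G : Type*} [Group G] [TopologicalSpace G] (z : ℕ → G) : Prop :=
  Tendsto (fun p : ℕ × ℕ => z p.1 * (z p.2)⁻¹) (atTop ×ˢ atTop) (𝓝 1)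

structure CosetCoding (G : Type*) [Group G] [TopologicalSpace G] where
  V : ℕ → Subgroup G
  hasBasis : (𝓝 (1 : G)).HasBasis (fun _ => True) fun m => (V m : Set G)
  d : ℕ → G
  denseRange : DenseRange d

theorem NonArchGroup.nonempty_cosetCoding {G : Type*} [Group G] [TopologicalSpace G]
    [FirstCountableTopology G] [TopologicalSpace.SeparableSpace G] (hna : NonArchGroup G) :
    Nonempty (CosetCoding G) := by
  obtain ⟨u, hu⟩ := (𝓝 (1 : G)).exists_antitone_basis
  choose V hVo hVu using fun m => hna (u m) (hu.mem m)
  obtain ⟨d, hd⟩ := TopologicalSpace.exists_dense_seq G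
  exact ⟨⟨V, hu.toHasBasis.to_hasBasis' (fun m _ => ⟨m, trivial, hVu m⟩)
    fun m _ => (hVo m).mem_nhds (V m).one_mem, d, hd⟩⟩

namespace CosetCoding

variable {G : Type*} [Group G] [TopologicalSpace G] (C : CosetCoding G)

section Codes

noncomputable def code (m : ℕ) (g : G) : ℕ := sInf {i | C.d i * g⁻¹ ∈ C.V m}

noncomputable def embed (g : G) : ℕ → ℕ := fun m => C.code m g

theorem isRightCauchy_of_forall_exists_eventually_mem {z : ℕ → G}
    (h : ∀ m, ∃ a, ∀ᶠ n in atTop, z n * a ∈ C.V m) : IsRightCauchy z := by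
  refine C.hasBasis.tendsto_right_iff.2 fun m _ => ?_
  obtain ⟨a, ha⟩ := h m
  filter_upwards [ha.prod_mk ha] with p hp
  show z p.1 * (z p.2)⁻¹ ∈ C.V m
  rw [show z p.1 * (z p.2)⁻¹ = z p.1 * a * (z p.2 * a)⁻¹ by group]
  exact (C.V m).mul_mem hp.1 ((C.V m).inv_mem hp.2)

variable [IsTopologicalGroup G]

theorem isOpen (m : ℕ) : IsOpen (C.V m : Set G) :=
  Subgroup.isOpen_of_mem_nhds _ (C.hasBasis.mem_of_mem trivial)

theorem code_spec (m : ℕ) (g : G) : C.d (C.code m g) * g⁻¹ ∈ C.V m :=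
  Nat.sInf_mem (C.denseRange.exists_mem_open ((C.isOpen m).preimage (continuous_mul_const g⁻¹))
    ⟨g, by simp [(C.V m).one_mem]⟩)

theorem code_eq_code_iff {m : ℕ} {g h : G} : C.code m g = C.code m h ↔ g * h⁻¹ ∈ C.V m := by
  constructor
  · intro he
    convert (C.V m).mul_mem ((C.V m).inv_mem (C.code_spec m g)) (he ▸ C.code_spec m h) using 1
    group
  · intro hgh
    have : ∀ i, C.d i * h⁻¹ ∈ C.V m ↔ C.d i * g⁻¹ ∈ C.V m := fun i => by
      rw [show C.d i * h⁻¹ = C.d i * g⁻¹ * (g * h⁻¹) by group, Subgroup.mul_mem_cancel_right _ hgh]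
    simp only [code, this]

theorem code_d_code_mul (m : ℕ) (g a : G) :
    C.code m (C.d (C.code m g) * a) = C.code m (g * a) := by
  rw [code_eq_code_iff]
  simpa [mul_assoc] using C.code_spec m g

theorem continuous_code (m : ℕ) : Continuous (C.code m) := by
  refine ((IsLocallyConstant.iff_exists_open _).2 fun g => ?_).continuous
  exact ⟨(· * g⁻¹) ⁻¹' C.V m, (C.isOpen m).preimage (continuous_mul_const _),
    by simp [(C.V m).one_mem], fun h hh => C.code_eq_code_iff.2 hh⟩

theorem nhds_hasBasis_code (g : G) :
    (𝓝 g).HasBasis (fun _ => True) fun m => {h | C.code m h = C.code m g} := by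
  rw [← map_mul_right_nhds_one g]
  convert C.hasBasis.map (· * g) using 2 with m
  ext h
  simp [code_eq_code_iff, image_mul_right]

theorem continuous_embed : Continuous C.embed := continuous_pi C.continuous_code

theorem isInducing_embed : IsInducing C.embed := by
  refine isInducing_iff_nhds.2 fun g => le_antisymm (C.continuous_embed.tendsto g).le_comap ?_
  refine (C.nhds_hasBasis_code g).ge_iff.2 fun m _ =>
    mem_comap.2 ⟨{η : ℕ → ℕ | η m = C.code m g}, ?_, subset_rfl⟩
  exact ((continuous_apply (A := fun _ : ℕ => ℕ) m).isOpen_preimage {C.code m g}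
    (isOpen_discrete _)).mem_nhds rfl

end Codes

section Shift

-- Right translation by the limit of `z`, read off on codes.
noncomputable def shift (z : ℕ → G) (η : ℕ → ℕ) (m : ℕ) : ℕ :=
  limUnder atTop fun n => C.code m (C.d (η m) * z n)

theorem continuous_shift (z : ℕ → G) : Continuous (C.shift z) :=
  continuous_pi fun m => (continuous_of_discreteTopology
    (f := fun k => limUnder atTop fun n => C.code m (C.d k * z n))).comp (continuous_apply m)

variable [IsTopologicalGroup G] {z : ℕ → G}

theorem tendsto_code_mul_shift (hz : IsRightCauchy z) (η : ℕ → ℕ) (m : ℕ) :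
    Tendsto (fun n => C.code m (C.d (η m) * z n)) atTop (𝓝 (C.shift z η m)) := by
  refine tendsto_nhds_limUnder (exists_tendsto_of_eventually_eq_prod ?_)
  have hconj : Tendsto (fun p : ℕ × ℕ => C.d (η m) * (z p.1 * (z p.2)⁻¹) * (C.d (η m))⁻¹)
      (atTop ×ˢ atTop) (𝓝 1) :=
    (((continuous_const.mul continuous_id).mul continuous_const).tendsto' 1 1 (by simp)).comp hz
  filter_upwards [hconj ((C.isOpen m).mem_nhds (C.V m).one_mem)] with p hp
  rw [code_eq_code_iff, show C.d (η m) * z p.1 * (C.d (η m) * z p.2)⁻¹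
    = C.d (η m) * (z p.1 * (z p.2)⁻¹) * (C.d (η m))⁻¹ by group]
  exact hp

theorem tendsto_embed_mul_shift (hz : IsRightCauchy z) (g : G) :
    Tendsto (fun n => C.embed (g * z n)) atTop (𝓝 (C.shift z (C.embed g))) :=
  tendsto_pi_nhds.2 fun m => by
    simpa only [embed, code_d_code_mul] using C.tendsto_code_mul_shift hz (C.embed g) m

theorem shift_inv_shift_embed (hz : IsRightCauchy z) (hz' : IsRightCauchy z⁻¹) (g : G) :
    C.shift z⁻¹ (C.shift z (C.embed g)) = C.embed g := by
  funext m
  have hev := tendsto_pi_nhds.1 (C.tendsto_embed_mul_shift hz g) m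
  rw [nhds_discrete, tendsto_pure] at hev
  refine tendsto_nhds_unique (C.tendsto_code_mul_shift hz' _ m) (tendsto_const_nhds.congr' ?_)
  filter_upwards [hev] with n hn
  simp only [embed] at hn
  rw [Pi.inv_apply, ← hn, code_d_code_mul, mul_inv_cancel_right]
  rfl

theorem mapsTo_shift_closure_range_embed (hz : IsRightCauchy z) :
    MapsTo (C.shift z) (closure (range C.embed)) (closure (range C.embed)) := by
  have : MapsTo (C.shift z) (range C.embed) (closure (range C.embed)) := by
    rintro _ ⟨g, rfl⟩
    exact mem_closure_of_tendsto (C.tendsto_embed_mul_shift hz g)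
      (Eventually.of_forall fun n => mem_range_self _)
  simpa using this.closure (C.continuous_shift z)

theorem eqOn_shift_inv_shift (hz : IsRightCauchy z) (hz' : IsRightCauchy z⁻¹) :
    EqOn (C.shift z⁻¹ ∘ C.shift z) id (closure (range C.embed)) :=
  EqOn.closure (by rintro _ ⟨g, rfl⟩; exact C.shift_inv_shift_embed hz hz' g)
    ((C.continuous_shift _).comp (C.continuous_shift _)) continuous_id

noncomputable def shiftHomeomorph (hz : IsRightCauchy z) (hz' : IsRightCauchy z⁻¹) :
    closure (range C.embed) ≃ₜ closure (range C.embed) where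
  toFun := (C.mapsTo_shift_closure_range_embed hz).restrict
  invFun := (C.mapsTo_shift_closure_range_embed hz').restrict
  left_inv p := Subtype.ext (C.eqOn_shift_inv_shift hz hz' p.2)
  right_inv p := Subtype.ext (by
    have h := C.eqOn_shift_inv_shift hz' (by rwa [inv_inv]) p.2
    rw [inv_inv] at h
    exact h)
  continuous_toFun := (C.continuous_shift z).restrict _
  continuous_invFun := (C.continuous_shift z⁻¹).restrict _

theorem exists_shift_embed_eq_embed [PolishSpace G] (hz : IsRightCauchy z)
    (hz' : IsRightCauchy z⁻¹) : ∃ u v : G, C.shift z (C.embed u) = C.embed v := by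
  let _ := TopologicalSpace.upgradeIsCompletelyMetrizable G
  have := (isClosed_closure (s := range C.embed)).isCompletelyMetrizableSpace
  have : Nonempty (closure (range C.embed)) :=
    ⟨⟨C.embed 1, subset_closure (mem_range_self 1)⟩⟩
  let e := C.shiftHomeomorph hz hz'
  have hS := C.isInducing_embed.range_mem_residual_closure
  have hS' : e ⁻¹' {p | (p : ℕ → ℕ) ∈ range C.embed} ∈ residual _ := by
    rw [← e.residual_map_eq] at hS
    exact hS
  obtain ⟨p, ⟨u, hu⟩, ⟨v, hv⟩⟩ := (dense_of_mem_residual (inter_mem hS hS')).nonempty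
  exact ⟨u, v, by rw [hu]; exact hv.symm⟩

end Shift

section Reduction

-- The tag `m` keeps the code sequences of different levels `m` apart.
noncomputable def codeSeq (x : ℕ → G) (a : ℕ × ℕ) : ℕ → ℕ :=
  fun n => Nat.pair a.1 (C.code a.1 (C.d a.2 * x n))

noncomputable def reduction (x : ℕ → G) : ℕ → ℕ → ℕ := enumGerms (C.codeSeq x)

theorem eqPlus_reduction_iff (x y : ℕ → G) :
    EqPlus (C.reduction x) (C.reduction y) ↔
      (∀ a, ∃ b, C.codeSeq x a =ᶠ[atTop] C.codeSeq y b) ∧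
        ∀ b, ∃ a, C.codeSeq y b =ᶠ[atTop] C.codeSeq x a := by
  rw [EqPlus, reduction, reduction, range_enumGerms, range_enumGerms, Subset.antisymm_iff,
    setOf_exists_eventuallyEq_subset_iff, setOf_exists_eventuallyEq_subset_iff]

theorem codeSeq_eventuallyEq_iff {x y : ℕ → G} {m i m' i' : ℕ} :
    C.codeSeq x (m, i) =ᶠ[atTop] C.codeSeq y (m', i') ↔
      m = m' ∧ ∀ᶠ n in atTop, C.code m (C.d i * x n) = C.code m (C.d i' * y n) := by
  simp only [EventuallyEq, codeSeq, Nat.pair_eq_pair, eventually_and, eventually_const]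
  constructor <;> rintro ⟨rfl, h⟩ <;> exact ⟨rfl, h⟩

variable [IsTopologicalGroup G]

theorem continuous_reduction : Continuous C.reduction :=
  continuous_pi fun p => continuous_pi fun k => (continuous_of_discreteTopology
    (f := fun c => (Denumerable.ofNat ((ℕ × ℕ) × List ℕ) p).2.getD k
      (Nat.pair (Denumerable.ofNat ((ℕ × ℕ) × List ℕ) p).1.1 c))).comp
    ((C.continuous_code _).comp (continuous_const.mul (continuous_apply k)))

theorem exists_codeSeq_eventuallyEq_of_tendsto {x y : ℕ → G} {g : G}
    (h : Tendsto (fun n => x n * (y n)⁻¹) atTop (𝓝 g)) (a : ℕ × ℕ) :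
    ∃ b, C.codeSeq x a =ᶠ[atTop] C.codeSeq y b := by
  obtain ⟨m, i⟩ := a
  set i' := C.code m (C.d i * g)
  refine ⟨(m, i'), C.codeSeq_eventuallyEq_iff.2 ⟨rfl, ?_⟩⟩
  have hlim : Tendsto (fun n => C.d i * (x n * (y n)⁻¹) * (C.d i')⁻¹) atTop
      (𝓝 (C.d i * g * (C.d i')⁻¹)) := (h.const_mul _).mul_const _
  have hmem : C.d i * g * (C.d i')⁻¹ ∈ C.V m := by
    simpa using (C.V m).inv_mem (C.code_spec m (C.d i * g))
  filter_upwards [hlim ((C.isOpen m).mem_nhds hmem)] with n hn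
  rw [code_eq_code_iff, show C.d i * x n * (C.d i' * y n)⁻¹
    = C.d i * (x n * (y n)⁻¹) * (C.d i')⁻¹ by group]
  exact hn

theorem isRightCauchy_of_forall_exists_codeSeq_eventuallyEq {x y : ℕ → G}
    (h : ∀ a, ∃ b, C.codeSeq x a =ᶠ[atTop] C.codeSeq y b) :
    IsRightCauchy fun n => x n * (y n)⁻¹ := by
  refine C.isRightCauchy_of_forall_exists_eventually_mem fun m => ?_
  obtain ⟨⟨m', i'⟩, hb⟩ := h (m, C.code m 1)
  obtain ⟨rfl, hev⟩ := C.codeSeq_eventuallyEq_iff.1 hb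
  have hd : C.d (C.code m 1) ∈ C.V m := by simpa using C.code_spec m 1
  refine ⟨(C.d i')⁻¹, hev.mono fun n hn => ?_⟩
  rw [code_eq_code_iff] at hn
  rw [show x n * (y n)⁻¹ * (C.d i')⁻¹
    = (C.d (C.code m 1))⁻¹ * (C.d (C.code m 1) * x n * (C.d i' * y n)⁻¹) by group]
  exact (C.V m).mul_mem ((C.V m).inv_mem hd) hn

end Reduction

end CosetCoding

theorem NonArchGroup.exists_tendsto_of_isRightCauchy {G : Type*} [Group G] [TopologicalSpace G]
    [IsTopologicalGroup G] [PolishSpace G] (hna : NonArchGroup G) {z : ℕ → G}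
    (hr : IsRightCauchy z) (hl : IsRightCauchy z⁻¹) : ∃ g, Tendsto z atTop (𝓝 g) := by
  obtain ⟨C⟩ := hna.nonempty_cosetCoding
  obtain ⟨u, v, huv⟩ := C.exists_shift_embed_eq_embed hr hl
  have huz : Tendsto (fun n => u * z n) atTop (𝓝 v) :=
    C.isInducing_embed.tendsto_nhds_iff.2 (huv ▸ C.tendsto_embed_mul_shift hr u)
  exact ⟨u⁻¹ * v, by simpa using huz.const_mul u⁻¹⟩

/-- For a non-archimedean Polish group `G`, `E(G) ≤_B =⁺`. -/
theorem stmt4 {G : Type*} [Group G] [TopologicalSpace G] [IsTopologicalGroup G] [PolishSpace G]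
    (hna : NonArchGroup G) :
    BorelReducible (ERel G) EqPlus := by
  obtain ⟨C⟩ := hna.nonempty_cosetCoding
  refine ⟨C.reduction, C.continuous_reduction.borel_measurable, fun x y => ?_⟩
  rw [C.eqPlus_reduction_iff]
  constructor
  · rintro ⟨g, hg⟩
    exact ⟨C.exists_codeSeq_eventuallyEq_of_tendsto hg,
      C.exists_codeSeq_eventuallyEq_of_tendsto (g := g⁻¹) (by simpa using hg.inv)⟩
  · rintro ⟨hxy, hyx⟩
    have hinv : (fun n => x n * (y n)⁻¹)⁻¹ = fun n => y n * (x n)⁻¹ := funext fun n => by simp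
    exact hna.exists_tendsto_of_isRightCauchy
      (C.isRightCauchy_of_forall_exists_codeSeq_eventuallyEq hxy)
      (hinv ▸ C.isRightCauchy_of_forall_exists_codeSeq_eventuallyEq hyx)
end

section
/- Let Λ be a countable discrete group and let G be a Polish group containing an element h₀ such that the identity 1_G does not lie in the closure of the conjugacy class {g·h₀·g⁻¹ : g ∈ G}. Then E(G × Λ) is Borel bireducible with E(G), where G × Λ carries the product group structure and product topology. -/
open Filter Topology

/-!
Encode `x = (a, λ) ∈ (G × Λ)^ω` by one sequence in `G` indexed by `ℕ × ℕ` (and reindexed by `ℕ`):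
entry `(m, k)` is `a (max m k)`, multiplied on the right by `h₀` exactly when `k` is the code
`ι (λ m⁻¹ * λ (m + 1))` of the `m`-th increment of `λ`. As `Λ` is discrete, `x E(G × Λ) y`
for `y = (a', λ')` says that `a * a'⁻¹` converges and that the increments of `λ` and `λ'`
eventually agree. If so, the two encodings carry the same marks outside a finite set, and
`max m k → ∞` along the cofinite filter. Conversely, column `m = 0` recovers the convergence of
`a * a'⁻¹`; and at infinitely many pairs marked for `x` but not for `y` the quotient is
`a * h₀ * a'⁻¹`, so dividing by `a * a'⁻¹` yields conjugates of `h₀` converging to `1`, which the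
hypothesis on `h₀` forbids.
-/

section Increments

variable {Λ : Type*} [Group Λ]

def seqIncr (u : ℕ → Λ) (n : ℕ) : Λ := (u n)⁻¹ * u (n + 1)

lemma mul_inv_succ_eq_iff_seqIncr_eq (u v : ℕ → Λ) (n : ℕ) :
    u (n + 1) * (v (n + 1))⁻¹ = u n * (v n)⁻¹ ↔ seqIncr u n = seqIncr v n := by
  rw [seqIncr, seqIncr, mul_inv_eq_iff_eq_mul, inv_mul_eq_iff_eq_mul, mul_assoc]

lemma eRel_iff_eventually_seqIncr_eq [TopologicalSpace Λ] [DiscreteTopology Λ] {u v : ℕ → Λ} :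
    ERel Λ u v ↔ ∀ᶠ n in atTop, seqIncr u n = seqIncr v n := by
  simp_rw [ERel, nhds_discrete, ← eventuallyConst_iff_tendsto, eventuallyConst_atTop_nat,
    mul_inv_succ_eq_iff_seqIncr_eq, eventually_atTop]

end Increments

lemma eRel_prod_iff {G H : Type*} [Group G] [TopologicalSpace G] [Group H] [TopologicalSpace H]
    {x y : ℕ → G × H} :
    ERel (G × H) x y ↔
      ERel G (Prod.fst ∘ x) (Prod.fst ∘ y) ∧ ERel H (Prod.snd ∘ x) (Prod.snd ∘ y) := by
  simp only [ERel, Prod.exists, nhds_prod_eq, tendsto_prod_iff', exists_and_left, exists_and_right]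
  rfl

lemma eRel_prodMk_const_iff {G H : Type*} [Group G] [TopologicalSpace G] [Group H]
    [TopologicalSpace H] {x y : ℕ → G} (c : H) :
    ERel (G × H) (fun n => (x n, c)) (fun n => (y n, c)) ↔ ERel G x y := by
  rw [eRel_prod_iff]
  exact and_iff_left ⟨c * c⁻¹, tendsto_const_nhds⟩

lemma tendsto_comp_equiv_atTop_iff {α β : Type*} (e : ℕ ≃ α) {f : α → β} {l : Filter β} :
    Tendsto (f ∘ e) atTop l ↔ Tendsto f cofinite l := by
  rw [← Nat.cofinite_eq_atTop]
  refine ⟨fun h => ?_, fun h => h.comp e.injective.tendsto_cofinite⟩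
  simpa [Function.comp_def] using h.comp e.symm.injective.tendsto_cofinite

lemma tendsto_max_cofinite_atTop : Tendsto (fun p : ℕ × ℕ => max p.1 p.2) cofinite atTop := by
  refine tendsto_atTop.2 fun M => ?_
  refine ((Set.finite_Iio M).prod (Set.finite_Iio M)).subset fun p hp => ?_
  simp_all

section Tagging

variable {G : Type*} [Group G]

def tagSeq (h₀ : G) (a : ℕ → G) (s : ℕ → ℕ) (p : ℕ × ℕ) : G :=
  a (max p.1 p.2) * if s p.1 = p.2 then h₀ else 1

lemma tagSeq_mul_inv_tagSeq_of_iff {h₀ : G} {a b : ℕ → G} {s t : ℕ → ℕ} {p : ℕ × ℕ}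
    (hp : s p.1 = p.2 ↔ t p.1 = p.2) :
    tagSeq h₀ a s p * (tagSeq h₀ b t p)⁻¹ = a (max p.1 p.2) * (b (max p.1 p.2))⁻¹ := by
  by_cases hs : s p.1 = p.2 <;> simp [tagSeq, hs, hp.1, mt hp.2, mul_assoc]

variable [TopologicalSpace G]

lemma tendsto_tagSeq_mul_inv {h₀ : G} {a b : ℕ → G} {s t : ℕ → ℕ} {g : G}
    (hab : Tendsto (fun n => a n * (b n)⁻¹) atTop (𝓝 g)) (hst : ∀ᶠ n in atTop, s n = t n) :
    Tendsto (fun p => tagSeq h₀ a s p * (tagSeq h₀ b t p)⁻¹) cofinite (𝓝 g) := by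
  rw [← Nat.cofinite_eq_atTop] at hst
  have hmark : ∀ᶠ p : ℕ × ℕ in cofinite, s p.1 = p.2 ↔ t p.1 = p.2 := by
    refine ((hst.image fun n => (n, s n)).union (hst.image fun n => (n, t n))).subset ?_
    rintro ⟨m, k⟩ hmk
    simp only [Set.mem_compl_iff, Set.mem_ofPred_eq, Set.mem_union, Set.mem_image,
      Prod.mk.injEq] at hmk ⊢
    by_cases hs : s m = k
    · exact Or.inl ⟨m, fun h => hmk (by rw [← h]), rfl, hs⟩
    · exact Or.inr ⟨m, fun h => hmk (by rw [← h]), rfl, by tauto⟩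
  exact (hab.comp tendsto_max_cofinite_atTop).congr'
    (hmark.mono fun p hp => (tagSeq_mul_inv_tagSeq_of_iff hp).symm)

lemma tendsto_mul_inv_of_tendsto_tagSeq {h₀ : G} {a b : ℕ → G} {s t : ℕ → ℕ} {g : G}
    (h : Tendsto (fun p => tagSeq h₀ a s p * (tagSeq h₀ b t p)⁻¹) cofinite (𝓝 g)) :
    Tendsto (fun n => a n * (b n)⁻¹) atTop (𝓝 g) := by
  have hcol := h.comp (Prod.mk_right_injective 0).tendsto_cofinite
  rw [← Nat.cofinite_eq_atTop]
  refine hcol.congr' ?_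
  filter_upwards [(Set.finite_singleton (s 0)).eventually_cofinite_notMem,
    (Set.finite_singleton (t 0)).eventually_cofinite_notMem] with k hs ht
  rw [Function.comp_apply, tagSeq_mul_inv_tagSeq_of_iff]
  · simp
  · simp_all [eq_comm]

lemma one_mem_closure_conj_of_tendsto [IsTopologicalGroup G] {ι : Type*} {l : Filter ι} [l.NeBot]
    {h₀ g : G} {a b : ι → G} (hab : Tendsto (fun i => a i * (b i)⁻¹) l (𝓝 g))
    (hahb : Tendsto (fun i => a i * h₀ * (b i)⁻¹) l (𝓝 g)) :
    (1 : G) ∈ closure {x : G | ∃ g : G, x = g * h₀ * g⁻¹} := by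
  have hconj := hab.inv.mul hahb
  rw [inv_mul_cancel] at hconj
  exact mem_closure_of_tendsto hconj (Eventually.of_forall fun i => ⟨b i, by group⟩)

lemma eventually_eq_of_tendsto_tagSeq [IsTopologicalGroup G] {h₀ : G}
    (hh₀ : (1 : G) ∉ closure {x : G | ∃ g : G, x = g * h₀ * g⁻¹})
    {a b : ℕ → G} {s t : ℕ → ℕ} {g : G}
    (h : Tendsto (fun p => tagSeq h₀ a s p * (tagSeq h₀ b t p)⁻¹) cofinite (𝓝 g)) :
    ∀ᶠ n in atTop, s n = t n := by
  by_contra hst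
  obtain ⟨φ, hφ, hne⟩ := extraction_of_frequently_atTop (not_eventually.1 hst)
  have hmarked_inj : Function.Injective fun k => (φ k, s (φ k)) :=
    fun _ _ h => hφ.injective (congrArg Prod.fst h)
  have hmarked := hmarked_inj.tendsto_cofinite.mono_left atTop_le_cofinite
  set m := fun k => max (φ k) (s (φ k))
  have hm : Tendsto m atTop atTop :=
    tendsto_atTop_mono (fun k => le_max_left _ _) hφ.tendsto_atTop
  refine hh₀ (one_mem_closure_conj_of_tendsto (a := a ∘ m) (b := b ∘ m)
    ((tendsto_mul_inv_of_tendsto_tagSeq h).comp hm) ((h.comp hmarked).congr fun k => ?_))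
  simp [tagSeq, m, Ne.symm (hne k)]

lemma tendsto_tagSeq_mul_inv_iff [IsTopologicalGroup G] {h₀ : G}
    (hh₀ : (1 : G) ∉ closure {x : G | ∃ g : G, x = g * h₀ * g⁻¹})
    {a b : ℕ → G} {s t : ℕ → ℕ} {g : G} :
    Tendsto (fun p => tagSeq h₀ a s p * (tagSeq h₀ b t p)⁻¹) cofinite (𝓝 g) ↔
      Tendsto (fun n => a n * (b n)⁻¹) atTop (𝓝 g) ∧ ∀ᶠ n in atTop, s n = t n :=
  ⟨fun h => ⟨tendsto_mul_inv_of_tendsto_tagSeq h, eventually_eq_of_tendsto_tagSeq hh₀ h⟩,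
    fun h => tendsto_tagSeq_mul_inv h.1 h.2⟩

end Tagging

section Reduction

variable {G Λ : Type*} [Group G] [TopologicalSpace G] [Group Λ] [TopologicalSpace Λ]

def tagReduction (h₀ : G) (ι : Λ → ℕ) (e : ℕ ≃ ℕ × ℕ) (x : ℕ → G × Λ) : ℕ → G :=
  tagSeq h₀ (Prod.fst ∘ x) (ι ∘ seqIncr (Prod.snd ∘ x)) ∘ e

lemma continuous_tagReduction [IsTopologicalGroup G] [DiscreteTopology Λ] (h₀ : G) (ι : Λ → ℕ)
    (e : ℕ ≃ ℕ × ℕ) : Continuous (tagReduction h₀ ι e) := by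
  refine continuous_pi fun j => ?_
  have hentry (m k : ℕ) : Continuous fun x : ℕ → G × Λ =>
      (x (max m k)).1 * if ι ((x m).2⁻¹ * (x (m + 1)).2) = k then h₀ else 1 := by
    have hmark := continuous_of_discreteTopology
      (f := fun q : Λ × Λ => if ι (q.1⁻¹ * q.2) = k then h₀ else 1)
    exact (continuous_apply (max m k)).fst.mul
      (hmark.comp ((continuous_apply m).snd.prodMk (continuous_apply (m + 1)).snd))
  exact hentry (e j).1 (e j).2

lemma eRel_tagReduction_iff [IsTopologicalGroup G] [DiscreteTopology Λ] {h₀ : G}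
    (hh₀ : (1 : G) ∉ closure {x : G | ∃ g : G, x = g * h₀ * g⁻¹}) {ι : Λ → ℕ}
    (hι : Function.Injective ι) (e : ℕ ≃ ℕ × ℕ) (x y : ℕ → G × Λ) :
    ERel G (tagReduction h₀ ι e x) (tagReduction h₀ ι e y) ↔ ERel (G × Λ) x y := by
  rw [eRel_prod_iff, eRel_iff_eventually_seqIncr_eq (Λ := Λ)]
  unfold ERel
  rw [← exists_and_right]
  refine exists_congr fun g => (tendsto_comp_equiv_atTop_iff e
    (f := fun p => tagSeq h₀ (Prod.fst ∘ x) (ι ∘ seqIncr (Prod.snd ∘ x)) p *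
      (tagSeq h₀ (Prod.fst ∘ y) (ι ∘ seqIncr (Prod.snd ∘ y)) p)⁻¹)).trans ?_
  simp only [tendsto_tagSeq_mul_inv_iff hh₀, Function.comp_apply, hι.eq_iff]

end Reduction

theorem stmt5_general {G Λ : Type*} [Group G] [TopologicalSpace G] [IsTopologicalGroup G]
    [Group Λ] [TopologicalSpace Λ] [Countable Λ] [DiscreteTopology Λ]
    (h₀ : G) (hh₀ : (1 : G) ∉ closure {x : G | ∃ g : G, x = g * h₀ * g⁻¹}) :
    BorelReducible (ERel (G × Λ)) (ERel G) ∧ BorelReducible (ERel G) (ERel (G × Λ)) := by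
  obtain ⟨ι, hι⟩ := Countable.exists_injective_nat Λ
  refine ⟨⟨tagReduction h₀ ι Nat.pairEquiv.symm,
      (continuous_tagReduction h₀ ι _).borel_measurable,
      fun x y => (eRel_tagReduction_iff hh₀ hι _ x y).symm⟩,
    ⟨fun x n => (x n, (1 : Λ)),
      (continuous_pi fun n => (continuous_apply n).prodMk continuous_const).borel_measurable,
      fun x y => (eRel_prodMk_const_iff 1).symm⟩⟩

/-- Let `Λ` be a countable discrete group and `G` a Polish group containing an element
`h₀` whose conjugacy class does not accumulate at the identity. Then `E(G × Λ)` is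
Borel bireducible with `E(G)`. -/
theorem stmt5 {G Λ : Type*} [Group G] [TopologicalSpace G] [IsTopologicalGroup G] [PolishSpace G]
    [Group Λ] [TopologicalSpace Λ] [IsTopologicalGroup Λ] [Countable Λ] [DiscreteTopology Λ]
    (h₀ : G) (hh₀ : (1 : G) ∉ closure {x : G | ∃ g : G, x = g * h₀ * g⁻¹}) :
    BorelReducible (ERel (G × Λ)) (ERel G) ∧ BorelReducible (ERel G) (ERel (G × Λ)) :=
  stmt5_general h₀ hh₀
end

section
/- Let G be a Polish group acting continuously on a Polish space X, and let x, y ∈ X. If there exists a left Cauchy sequence (g_n) in G such that g_n·x → y, then there exists a right Cauchy sequence (h_n) in G such that h_n·y → x. (That is, left ι-embeddability of x into y implies right ι-embeddability of x into y.) -/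
/-!
If `(g n)` is left Cauchy then `(g n)⁻¹` is right Cauchy, and `(g n)⁻¹ • y → x`: the double
sequence `((g n)⁻¹ * g m) • x` tends to `x`, while for fixed `n` it tends to `(g n)⁻¹ • y` as
`m → ∞`; in a regular space closed neighbourhoods of `x` pass to these inner limits.
-/

open Filter Topology

/-- A sequence `(g n)` in a topological group is left Cauchy if
`(g m)⁻¹ * g n → 1` as `m, n → ∞`. -/
def LeftCauchy {G : Type*} [Group G] [TopologicalSpace G] (g : ℕ → G) : Prop :=
  Tendsto (fun p : ℕ × ℕ => (g p.1)⁻¹ * g p.2) atTop (𝓝 1)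

/-- A sequence `(g n)` in a topological group is right Cauchy if
`g m * (g n)⁻¹ → 1` as `m, n → ∞`. -/
def RightCauchy {G : Type*} [Group G] [TopologicalSpace G] (g : ℕ → G) : Prop :=
  Tendsto (fun p : ℕ × ℕ => g p.1 * (g p.2)⁻¹) atTop (𝓝 1)

theorem LeftCauchy.rightCauchy_inv {G : Type*} [Group G] [TopologicalSpace G] {g : ℕ → G}
    (hg : LeftCauchy g) : RightCauchy fun n => (g n)⁻¹ := by
  simpa [RightCauchy, LeftCauchy] using hg

theorem Filter.Tendsto.of_tendsto_prod_of_tendsto_right {α β X : Type*} [TopologicalSpace X]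
    [RegularSpace X] {la : Filter α} {lb : Filter β} [lb.NeBot] {u : α → β → X} {z : α → X}
    {x : X} (hu : Tendsto (Function.uncurry u) (la ×ˢ lb) (𝓝 x))
    (hz : ∀ a, Tendsto (u a) lb (𝓝 (z a))) : Tendsto z la (𝓝 x) := by
  refine (closed_nhds_basis x).tendsto_right_iff.2 fun t ⟨ht, htc⟩ => ?_
  filter_upwards [(hu.eventually (eventually_mem_set.2 ht)).curry] with a ha
  exact htc.mem_of_tendsto (hz a) ha

theorem LeftCauchy.tendsto_inv_smul {G X : Type*} [Group G] [TopologicalSpace G]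
    [TopologicalSpace X] [RegularSpace X] [MulAction G X] [ContinuousSMul G X] {g : ℕ → G}
    (hg : LeftCauchy g) {x y : X} (hgx : Tendsto (fun n => g n • x) atTop (𝓝 y)) :
    Tendsto (fun n => (g n)⁻¹ • y) atTop (𝓝 x) := by
  have hjoint : Tendsto (fun p : ℕ × ℕ => ((g p.1)⁻¹ * g p.2) • x) (atTop ×ˢ atTop) (𝓝 x) := by
    rw [prod_atTop_atTop_eq]
    simpa using hg.smul (tendsto_const_nhds (x := x))
  refine hjoint.of_tendsto_prod_of_tendsto_right (u := fun n m => ((g n)⁻¹ * g m) • x)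
    fun n => ?_
  simpa [mul_smul] using hgx.const_smul (g n)⁻¹

theorem stmt6_general {G X : Type*} [Group G] [TopologicalSpace G]
    [TopologicalSpace X] [PolishSpace X] [MulAction G X] [ContinuousSMul G X]
    (x y : X)
    (hl : ∃ g : ℕ → G, LeftCauchy g ∧ Tendsto (fun n => g n • x) atTop (𝓝 y)) :
    ∃ h : ℕ → G, RightCauchy h ∧ Tendsto (fun n => h n • y) atTop (𝓝 x) := by
  obtain ⟨g, hg, hgx⟩ := hl
  exact ⟨fun n => (g n)⁻¹, hg.rightCauchy_inv, hg.tendsto_inv_smul hgx⟩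

/-- For a Polish group `G` acting continuously on a Polish space `X`,
left ι-embeddability of `x` into `y` implies right ι-embeddability of `x` into `y`. -/
theorem stmt6 {G X : Type*} [Group G] [TopologicalSpace G] [IsTopologicalGroup G] [PolishSpace G]
    [TopologicalSpace X] [PolishSpace X] [MulAction G X] [ContinuousSMul G X]
    (x y : X)
    (hl : ∃ g : ℕ → G, LeftCauchy g ∧ Tendsto (fun n => g n • x) atTop (𝓝 y)) :
    ∃ h : ℕ → G, RightCauchy h ∧ Tendsto (fun n => h n • y) atTop (𝓝 x) :=
  stmt6_general x y hl
end

section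
/- Let G be a Polish group and let d be a compatible two-sided invariant metric on G. Let x, y ∈ G^ω, and suppose there exist sequences (γ_m) and (η_m) of elements of c(G) such that sup_{n∈ℕ} d(γ_m(n)·x(n)·y(n)⁻¹·η_m(n), 1_G) → 0 as m → ∞. Then x E(G) y, i.e., the sequence n ↦ x(n)·y(n)⁻¹ converges in G. (Consequently no TSI Polish group is unbalanced.) -/
/-!
Write `w n = x n * (y n)⁻¹`. By two-sided invariance
`d(γ_m(n) w(n) η_m(n), 1) = d(w(n), γ_m(n)⁻¹ η_m(n)⁻¹)`, so `w` is a uniform limit of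
convergent, hence Cauchy, sequences and is therefore Cauchy itself. It converges because a
compatible two-sided invariant metric on a Polish group is complete: the metric completion of
`G` is a group in which `G` is a dense Polish, hence Gδ, subgroup, and a dense Gδ subgroup of a
Baire group meets each of its translates, so it is the whole group.
-/

open Filter Topology

open Set TopologicalSpace UniformSpace

theorem Topology.IsDenseInducing.isGδ_range {α X : Type*} [TopologicalSpace α]
    [IsCompletelyMetrizableSpace α] [TopologicalSpace X] [T2Space X] {e : α → X}
    (he : IsDenseInducing e) : IsGδ (range e) := by
  let := upgradeIsCompletelyMetrizable α
  -- `x ∈ ⋂ n, U (1 / (n + 1))` says exactly that the trace filter `comap e (𝓝 x)` is Cauchy.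
  let U : ℝ → Set X := fun ε =>
    {x | ∃ t ∈ comap e (𝓝 x), ∀ a ∈ t, ∀ b ∈ t, dist a b < ε}
  have hU_open : ∀ ε, IsOpen (U ε) := by
    refine fun ε => isOpen_iff_mem_nhds.2 fun x ⟨t, ht, hsmall⟩ => ?_
    obtain ⟨V, hV, hVt⟩ := mem_comap.1 ht
    filter_upwards [eventually_mem_nhds_iff.2 hV] with y hy
    exact ⟨t, mem_comap.2 ⟨V, hy, hVt⟩, hsmall⟩
  suffices range e = ⋂ n : ℕ, U (1 / (n + 1)) from
    this ▸ IsGδ.iInter_of_isOpen fun n => hU_open _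
  refine Subset.antisymm ?_ fun x hx => ?_
  · rintro _ ⟨a, rfl⟩
    refine mem_iInter.2 fun n => ?_
    rw [mem_ofPred_eq, ← he.nhds_eq_comap]
    exact (Metric.cauchy_iff.1 cauchy_nhds).2 _ Nat.one_div_pos_of_nat
  · have hcauchy : Cauchy (comap e (𝓝 x)) := by
      refine Metric.cauchy_iff.2 ⟨he.comap_nhds_neBot x, fun ε hε => ?_⟩
      obtain ⟨n, hn⟩ := exists_nat_one_div_lt hε
      obtain ⟨t, ht, hsmall⟩ := mem_iInter.1 hx n
      exact ⟨t, ht, fun a ha b hb => (hsmall a ha b hb).trans hn⟩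
    obtain ⟨b, hb⟩ := CompleteSpace.complete hcauchy
    have := he.comap_nhds_neBot x
    exact ⟨b, tendsto_nhds_unique ((he.continuous.tendsto b).mono_left hb) tendsto_comap⟩

@[to_additive]
theorem Subgroup.eq_top_of_isGδ_of_dense {H : Type*} [Group H] [TopologicalSpace H]
    [SeparatelyContinuousMul H] [BaireSpace H] {S : Subgroup H} (hGδ : IsGδ (S : Set H))
    (hd : Dense (S : Set H)) : S = ⊤ := by
  refine eq_top_iff.2 fun ξ _ => ?_
  have htranslate : Dense ((ξ * ·) ⁻¹' (S : Set H)) :=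
    hd.preimage (Homeomorph.mulLeft ξ).isOpenMap
  obtain ⟨h, hS, hξS⟩ :=
    (hd.inter_of_Gδ hGδ (hGδ.preimage (continuous_const_mul ξ)) htranslate).nonempty
  simpa using S.mul_mem hξS (S.inv_mem hS)

theorem IsUniformAddGroup.completeSpace_of_isCompletelyMetrizableSpace {A : Type*} [AddGroup A]
    [MetricSpace A] [IsUniformAddGroup A] [IsCompletelyMetrizableSpace A] : CompleteSpace A := by
  have hrange : (Completion.toCompl : A →+ Completion A).range = ⊤ :=
    AddSubgroup.eq_top_of_isGδ_of_dense Completion.isDenseInducing_coe.isGδ_range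
      Completion.denseRange_coe
  have hsurj : range (Completion.toCompl : A → Completion A) = univ := by
    rw [← AddMonoidHom.coe_range, hrange, AddSubgroup.coe_top]
  exact (Completion.isUniformInducing_coe A).completeSpace (hsurj ▸ isComplete_univ)

-- `UniformSpace.Completion` carries a group structure only for additive groups.
theorem IsUniformGroup.completeSpace_of_isCompletelyMetrizableSpace {G : Type*} [Group G]
    [MetricSpace G] [IsUniformGroup G] [IsCompletelyMetrizableSpace G] : CompleteSpace G :=
  have : IsCompletelyMetrizableSpace (Additive G) := ‹IsCompletelyMetrizableSpace G›
  have : IsUniformAddGroup (Additive G) := ⟨uniformContinuous_div (α := G)⟩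
  IsUniformAddGroup.completeSpace_of_isCompletelyMetrizableSpace (A := Additive G)

theorem IsIsometricSMul.isUniformGroup {G : Type*} [Group G] [PseudoMetricSpace G]
    [IsIsometricSMul G G] [IsIsometricSMul Gᵐᵒᵖ G] : IsUniformGroup G where
  uniformContinuous_div := by
    refine (LipschitzWith.of_dist_le_mul (K := 2) fun p q => ?_).uniformContinuous
    calc dist (p.1 / p.2) (q.1 / q.2)
        ≤ dist (p.1 / p.2) (q.1 / p.2) + dist (q.1 / p.2) (q.1 / q.2) := dist_triangle _ _ _
      _ = dist p.1 q.1 + dist p.2 q.2 := by rw [dist_div_right, dist_div_left]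
      _ ≤ 2 * dist p q := by
        rw [Prod.dist_eq]
        linarith [le_max_left (dist p.1 q.1) (dist p.2 q.2),
          le_max_right (dist p.1 q.1) (dist p.2 q.2)]

theorem TendstoUniformly.cauchySeq {ι β : Type*} [UniformSpace β] {F : ι → ℕ → β} {f : ℕ → β}
    {p : Filter ι} [p.NeBot] (h : TendstoUniformly F f p) (hF : ∀ i, CauchySeq (F i)) :
    CauchySeq f := by
  refine cauchySeq_iff_tendsto.2 fun s hs => ?_
  obtain ⟨t, ht, htsymm, hts⟩ := comp_comp_symm_mem_uniformity_sets hs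
  obtain ⟨i, hi⟩ := (h t ht).exists
  rw [mem_map]
  filter_upwards [mem_map.1 (cauchySeq_iff_tendsto.1 (hF i) ht)] with q hq
  exact hts ⟨F i q.2, ⟨F i q.1, hi q.1, hq⟩, htsymm.symm _ _ (hi q.2)⟩

theorem dist_mul_mul_one {G : Type*} [Group G] [PseudoMetricSpace G] [IsIsometricSMul G G]
    [IsIsometricSMul Gᵐᵒᵖ G] (a b c : G) : dist (b * a * c) 1 = dist a (b⁻¹ * c⁻¹) := by
  calc dist (b * a * c) 1 = dist (b * a * c) (b * (b⁻¹ * c⁻¹) * c) := by group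
    _ = dist a (b⁻¹ * c⁻¹) := by rw [dist_mul_right, dist_mul_left]

theorem stmt10_general {G : Type*} [Group G] [ts : TopologicalSpace G]
    [PolishSpace G]
    (m : MetricSpace G) (hcompat : m.toUniformSpace.toTopologicalSpace = ts)
    (hlinv : ∀ g h k : G, m.dist (g * h) (g * k) = m.dist h k)
    (hrinv : ∀ g h k : G, m.dist (h * g) (k * g) = m.dist h k)
    (x y : ℕ → G) (γ η : ℕ → ℕ → G)
    (hγ : ∀ i, ∃ g : G, Tendsto (γ i) atTop (𝓝 g))
    (hη : ∀ i, ∃ g : G, Tendsto (η i) atTop (𝓝 g))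
    (hunif : ∀ ε > (0 : ℝ), ∀ᶠ i in atTop, ∀ n,
      m.dist (γ i n * x n * (y n)⁻¹ * η i n) 1 < ε) :
    ERel G x y := by
  subst hcompat
  have : IsIsometricSMul G G := ⟨fun g => Isometry.of_dist_eq (hlinv g)⟩
  have : IsIsometricSMul Gᵐᵒᵖ G := ⟨fun g => Isometry.of_dist_eq (hrinv g.unop)⟩
  have := IsIsometricSMul.isUniformGroup (G := G)
  have := IsUniformGroup.completeSpace_of_isCompletelyMetrizableSpace (G := G)
  have happrox : TendstoUniformly (fun i n => (γ i n)⁻¹ * (η i n)⁻¹)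
      (fun n => x n * (y n)⁻¹) atTop := by
    refine Metric.tendstoUniformly_iff.2 fun ε hε => ?_
    filter_upwards [hunif ε hε] with i hi n
    rw [← dist_mul_mul_one, ← mul_assoc]
    exact hi n
  refine cauchySeq_tendsto_of_complete (happrox.cauchySeq fun i => ?_)
  obtain ⟨g, hg⟩ := hγ i
  obtain ⟨h, hh⟩ := hη i
  exact (hg.inv.mul hh.inv).cauchySeq

/-- Let `G` be a Polish group with a compatible two-sided invariant metric, and let
`x, y ∈ G^ω`. If there are sequences `(γ m)`, `(η m)` of convergent sequences in `G`
such that `γ m * (x * y⁻¹) * η m` converges to `1` uniformly as `m → ∞`, then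
`x E(G) y`. (Hence no TSI Polish group is unbalanced.) -/
theorem stmt10 {G : Type*} [Group G] [ts : TopologicalSpace G] [IsTopologicalGroup G]
    [PolishSpace G]
    (m : MetricSpace G) (hcompat : m.toUniformSpace.toTopologicalSpace = ts)
    (hlinv : ∀ g h k : G, m.dist (g * h) (g * k) = m.dist h k)
    (hrinv : ∀ g h k : G, m.dist (h * g) (k * g) = m.dist h k)
    (x y : ℕ → G) (γ η : ℕ → ℕ → G)
    (hγ : ∀ i, ∃ g : G, Tendsto (γ i) atTop (𝓝 g))
    (hη : ∀ i, ∃ g : G, Tendsto (η i) atTop (𝓝 g))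
    (hunif : ∀ ε > (0 : ℝ), ∀ᶠ i in atTop, ∀ n,
      m.dist (γ i n * x n * (y n)⁻¹ * η i n) 1 < ε) :
    ERel G x y :=
  stmt10_general (ts := ts) m hcompat hlinv hrinv x y γ η hγ hη hunif
end

section
/- Let G be a Polish group that is not distal, and let d be any compatible metric on G. Then G is unbalanced: there exist z ∈ G^ω with z ∉ c(G) and sequences (γ_m), (η_m) of elements of c(G) such that sup_{n∈ℕ} d(γ_m(n)·z(n)·η_m(n), 1_G) → 0 as m → ∞. -/
open Filter Topology

/-- A topological group is distal if, for every `h ≠ 1`, the identity does not lie in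
the closure of the conjugacy class of `h`. -/
def Distal (G : Type*) [Group G] [TopologicalSpace G] : Prop :=
  ∀ h : G, h ≠ 1 → (1 : G) ∉ closure {x : G | ∃ g : G, x = g * h * g⁻¹}

/-!
Since `G` is not distal, there are `h ≠ 1` and `g i` with `g i * h * (g i)⁻¹ → 1`.
Take `z = (1, h, 1, h, …)`, which does not converge, and the constant sequences
`γ i = g i`, `η i = (g i)⁻¹`: then `γ i * z * η i` alternates between `1` and
`g i * h * (g i)⁻¹`, so it tends to `1` uniformly in `n`.
-/

lemma exists_conj_tendsto_one_of_not_distal {G : Type*} [Group G] [TopologicalSpace G]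
    [FrechetUrysohnSpace G] (hG : ¬ Distal G) :
    ∃ h : G, h ≠ 1 ∧ ∃ g : ℕ → G, Tendsto (fun i => g i * h * (g i)⁻¹) atTop (𝓝 1) := by
  simp only [Distal, not_forall, not_not] at hG
  obtain ⟨h, hne, hcl⟩ := hG
  obtain ⟨x, hx, hlim⟩ := mem_closure_iff_seq_limit.mp hcl
  choose g hg using hx
  exact ⟨h, hne, g, by simpa only [← hg] using hlim⟩

lemma not_tendsto_ite_even {X : Type*} [TopologicalSpace X] [T1Space X] {a b : X}
    (hab : a ≠ b) (c : X) :
    ¬ Tendsto (fun n : ℕ => if Even n then a else b) atTop (𝓝 c) := by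
  intro hc
  have hmono : StrictMono (fun k : ℕ => 2 * k) := strictMono_mul_left_of_pos two_pos
  have heven : a = c := tendsto_const_nhds_iff.mp <|
    (hc.comp hmono.tendsto_atTop).congr fun k => by simp
  have hodd : b = c := tendsto_const_nhds_iff.mp <|
    (hc.comp (hmono.add_const 1).tendsto_atTop).congr fun k => by simp
  exact hab (heven.trans hodd.symm)

theorem stmt11_general {G : Type*} [Group G] [ts : TopologicalSpace G]
    (hG : ¬ Distal G)
    (m : MetricSpace G) (hcompat : m.toUniformSpace.toTopologicalSpace = ts) :
    ∃ z : ℕ → G, (¬ ∃ g : G, Tendsto z atTop (𝓝 g)) ∧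
      ∃ γ η : ℕ → ℕ → G,
        (∀ i, ∃ g : G, Tendsto (γ i) atTop (𝓝 g)) ∧
        (∀ i, ∃ g : G, Tendsto (η i) atTop (𝓝 g)) ∧
        ∀ ε > (0 : ℝ), ∀ᶠ i in atTop, ∀ n, m.dist (γ i n * z n * η i n) 1 < ε := by
  subst hcompat
  obtain ⟨h, hne, g, hg⟩ := exists_conj_tendsto_one_of_not_distal hG
  refine ⟨fun n => if Even n then 1 else h, fun ⟨c, hc⟩ => not_tendsto_ite_even hne.symm c hc,
    fun i _ => g i, fun i _ => (g i)⁻¹, fun i => ⟨g i, tendsto_const_nhds⟩,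
    fun i => ⟨(g i)⁻¹, tendsto_const_nhds⟩, fun ε hε => ?_⟩
  filter_upwards [Metric.tendsto_nhds.mp hg ε hε] with i hi n
  split_ifs
  · simpa using hε
  · exact hi

/-- If a Polish group `G` is not distal, then `G` is unbalanced: for any compatible
metric on `G`, there are `z ∈ G^ω \ c(G)` and sequences `(γ m)`, `(η m)` of convergent
sequences in `G` with `γ m * z * η m` converging to `1` uniformly as `m → ∞`. -/
theorem stmt11 {G : Type*} [Group G] [ts : TopologicalSpace G] [IsTopologicalGroup G]
    [PolishSpace G]
    (hG : ¬ Distal G)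
    (m : MetricSpace G) (hcompat : m.toUniformSpace.toTopologicalSpace = ts) :
    ∃ z : ℕ → G, (¬ ∃ g : G, Tendsto z atTop (𝓝 g)) ∧
      ∃ γ η : ℕ → ℕ → G,
        (∀ i, ∃ g : G, Tendsto (γ i) atTop (𝓝 g)) ∧
        (∀ i, ∃ g : G, Tendsto (η i) atTop (𝓝 g)) ∧
        ∀ ε > (0 : ℝ), ∀ᶠ i in atTop, ∀ n, m.dist (γ i n * z n * η i n) 1 < ε :=
  stmt11_general (ts := ts) hG m hcompat
end

section
/- Let G be a locally compact Polish group and let d be a compatible metric on G. Suppose there exist x, y ∈ G^ω with x·y⁻¹ ∉ c(G) (pointwise operations) and sequences (γ_m), (η_m) of elements of c(G) such that sup_{n∈ℕ} d(γ_m(n)·x(n)·y(n)⁻¹·η_m(n), 1_G) → 0 as m → ∞. Then G is not distal, i.e., there exists h ≠ 1_G whose conjugacy class {g·h·g⁻¹ : g ∈ G} has 1_G in its closure. (Hence a locally compact Polish group is unbalanced if and only if it is not distal.) -/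
/-!
Write `z = x * y⁻¹`, and let `γ i → a i`, `η i → b i`. Uniform convergence of `γ i * z * η i`
to `1` traps all values of `z` in a compact set, so the non-convergent sequence `z` has two
distinct cluster points `c ≠ c'`. Passing to the limit along `n` gives `a i * c * b i → 1` and `a i * c' * b i → 1` as `i → ∞`, and then
`a i * (c * c'⁻¹) * (a i)⁻¹ = (a i * c * b i) * (a i * c' * b i)⁻¹ → 1`.
-/

open Filter Topology

open scoped Pointwise

theorem Filter.Tendsto.mapClusterPt_prodMk {α X Y : Type*} [TopologicalSpace X]
    [TopologicalSpace Y] {l : Filter α} {u : α → X} {v : α → Y} {a : X} {w : Y}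
    (hu : Tendsto u l (𝓝 a)) (hv : MapClusterPt w l v) :
    MapClusterPt (a, w) l (fun n => (u n, v n)) := by
  rw [mapClusterPt_iff_frequently] at hv
  rw [((𝓝 a).basis_sets.prod_nhds (𝓝 w).basis_sets).mapClusterPt_iff_frequently]
  rintro ⟨s, t⟩ ⟨hs, ht⟩
  exact Eventually.and_frequently (hu hs) (hv t ht)

theorem exists_mapClusterPt_ne_of_not_tendsto {ι X : Type*} [TopologicalSpace X]
    {l : Filter ι} [l.NeBot] {f : ι → X} {S : Set X} (hS : IsCompact S)
    (hf : ∀ᶠ n in l, f n ∈ S) (hlim : ¬ ∃ c, Tendsto f l (𝓝 c)) :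
    ∃ c c', c ≠ c' ∧ MapClusterPt c l f ∧ MapClusterPt c' l f := by
  obtain ⟨c, -, hc⟩ := hS.exists_mapClusterPt (le_principal_iff.mpr hf)
  by_contra! hunique
  exact hlim ⟨c, hS.tendsto_nhds_of_unique_mapClusterPt hf
    fun c' _ hc' => of_not_not fun hne => hunique c' c hne hc' hc⟩

section TopologicalGroup

variable {G : Type*} [Group G] [TopologicalSpace G]

theorem exists_isCompact_forall_mem_of_mul_mul_mem [IsTopologicalGroup G]
    {u v z : ℕ → G} {a b : G} (hu : Tendsto u atTop (𝓝 a)) (hv : Tendsto v atTop (𝓝 b))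
    {K : Set G} (hK : IsCompact K) (hz : ∀ n, u n * z n * v n ∈ K) :
    ∃ S : Set G, IsCompact S ∧ ∀ n, z n ∈ S := by
  refine ⟨(insert a (Set.range u))⁻¹ * K * (insert b (Set.range v))⁻¹,
    (hu.isCompact_insert_range.inv.mul hK).mul hv.isCompact_insert_range.inv, fun n => ?_⟩
  have hzn : z n = (u n)⁻¹ * (u n * z n * v n) * (v n)⁻¹ := by group
  rw [hzn]
  exact Set.mul_mem_mul (Set.mul_mem_mul (Set.inv_mem_inv.mpr (.inr ⟨n, rfl⟩)) (hz n))
    (Set.inv_mem_inv.mpr (.inr ⟨n, rfl⟩))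

theorem MapClusterPt.mul_mul_of_tendsto [ContinuousMul G] {α : Type*} {l : Filter α}
    {u v z : α → G} {a b w : G} (hw : MapClusterPt w l z) (hu : Tendsto u l (𝓝 a))
    (hv : Tendsto v l (𝓝 b)) :
    MapClusterPt (a * w * b) l (fun n => u n * z n * v n) :=
  (hu.prodMk_nhds hv).mapClusterPt_prodMk hw |>.continuousAt_comp
    (f := fun p : (G × G) × G => p.1.1 * p.2 * p.1.2) (by fun_prop)

theorem one_mem_closure_conj_of_tendsto_mul_mul [IsTopologicalGroup G] {ι : Type*}
    {l : Filter ι} [l.NeBot] {a b : ι → G} {c c' : G}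
    (hc : Tendsto (fun i => a i * c * b i) l (𝓝 1))
    (hc' : Tendsto (fun i => a i * c' * b i) l (𝓝 1)) :
    (1 : G) ∈ closure {w : G | ∃ g : G, w = g * (c * c'⁻¹) * g⁻¹} := by
  have hconj : Tendsto (fun i => (a i * c * b i) * (a i * c' * b i)⁻¹) l (𝓝 1) := by
    simpa using hc.mul hc'.inv
  exact mem_closure_of_tendsto hconj (.of_forall fun i => ⟨a i, by group⟩)

end TopologicalGroup

theorem tendsto_mul_mul_of_mapClusterPt {G : Type*} [Group G] [PseudoMetricSpace G]
    [ContinuousMul G] {ι α : Type*} {L : Filter ι} {l : Filter α} {z : α → G} {w : G}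
    (hw : MapClusterPt w l z) {γ η : ι → α → G} {a b : ι → G}
    (ha : ∀ i, Tendsto (γ i) l (𝓝 (a i))) (hb : ∀ i, Tendsto (η i) l (𝓝 (b i)))
    (hunif : ∀ ε > (0 : ℝ), ∀ᶠ i in L, ∀ n, dist (γ i n * z n * η i n) 1 < ε) :
    Tendsto (fun i => a i * w * b i) L (𝓝 1) := by
  refine Metric.tendsto_nhds.mpr fun ε hε => ?_
  filter_upwards [hunif (ε / 2) (half_pos hε)] with i hi
  have hle : a i * w * b i ∈ Metric.closedBall 1 (ε / 2) :=
    Metric.isClosed_closedBall.mem_of_mapClusterPt (hw.mul_mul_of_tendsto (ha i) (hb i))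
      (.of_forall fun n => (hi n).le)
  exact (Metric.mem_closedBall.mp hle).trans_lt (half_lt_self hε)

theorem stmt12_general {G : Type*} [Group G] [ts : TopologicalSpace G] [IsTopologicalGroup G]
    [LocallyCompactSpace G]
    (m : MetricSpace G) (hcompat : m.toUniformSpace.toTopologicalSpace = ts)
    (x y : ℕ → G)
    (hxy : ¬ ∃ g : G, Tendsto (fun n => x n * (y n)⁻¹) atTop (𝓝 g))
    (γ η : ℕ → ℕ → G)
    (hγ : ∀ i, ∃ g : G, Tendsto (γ i) atTop (𝓝 g))
    (hη : ∀ i, ∃ g : G, Tendsto (η i) atTop (𝓝 g))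
    (hunif : ∀ ε > (0 : ℝ), ∀ᶠ i in atTop, ∀ n,
      m.dist (γ i n * x n * (y n)⁻¹ * η i n) 1 < ε) :
    ∃ h : G, h ≠ 1 ∧ (1 : G) ∈ closure {w : G | ∃ g : G, w = g * h * g⁻¹} := by
  subst hcompat
  let _ : MetricSpace G := m
  set z : ℕ → G := fun n => x n * (y n)⁻¹
  replace hunif : ∀ ε > (0 : ℝ), ∀ᶠ i in atTop, ∀ n, dist (γ i n * z n * η i n) 1 < ε := by
    simpa only [z, ← mul_assoc] using hunif
  choose a ha using hγ
  choose b hb using hη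
  obtain ⟨K, hK, hK1⟩ := exists_compact_mem_nhds (1 : G)
  obtain ⟨ε, hε, hballK⟩ := Metric.mem_nhds_iff.mp hK1
  obtain ⟨i, hi⟩ := (hunif ε hε).exists
  obtain ⟨S, hS, hzS⟩ := exists_isCompact_forall_mem_of_mul_mul_mem (ha i) (hb i) hK
    fun n => hballK (hi n)
  obtain ⟨c, c', hne, hc, hc'⟩ :=
    exists_mapClusterPt_ne_of_not_tendsto hS (.of_forall hzS) hxy
  exact ⟨c * c'⁻¹, mul_inv_eq_one.not.mpr hne, one_mem_closure_conj_of_tendsto_mul_mul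
    (tendsto_mul_mul_of_mapClusterPt hc ha hb hunif)
    (tendsto_mul_mul_of_mapClusterPt hc' ha hb hunif)⟩

/-- If a locally compact Polish group `G` is unbalanced — i.e. there are `x, y ∈ G^ω`
with `x * y⁻¹ ∉ c(G)` and sequences `(γ m)`, `(η m)` of convergent sequences in `G`
such that `γ m * (x * y⁻¹) * η m` converges to `1` uniformly (w.r.t. a compatible
metric) — then `G` is not distal. -/
theorem stmt12 {G : Type*} [Group G] [ts : TopologicalSpace G] [IsTopologicalGroup G]
    [PolishSpace G] [LocallyCompactSpace G]
    (m : MetricSpace G) (hcompat : m.toUniformSpace.toTopologicalSpace = ts)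
    (x y : ℕ → G)
    (hxy : ¬ ∃ g : G, Tendsto (fun n => x n * (y n)⁻¹) atTop (𝓝 g))
    (γ η : ℕ → ℕ → G)
    (hγ : ∀ i, ∃ g : G, Tendsto (γ i) atTop (𝓝 g))
    (hη : ∀ i, ∃ g : G, Tendsto (η i) atTop (𝓝 g))
    (hunif : ∀ ε > (0 : ℝ), ∀ᶠ i in atTop, ∀ n,
      m.dist (γ i n * x n * (y n)⁻¹ * η i n) 1 < ε) :
    ∃ h : G, h ≠ 1 ∧ (1 : G) ∈ closure {w : G | ∃ g : G, w = g * h * g⁻¹} :=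
  stmt12_general (ts := ts) m hcompat x y hxy γ η hγ hη hunif
end

section
/- Let G be a TSI Polish group. Then the product equivalence relation E(G) × E(G;0) on G^ω × G^ω is Borel reducible to E(G). -/
open Filter Topology

/-- `E(G;0)`: the relation on `G^ω` relating `x` and `y` iff `(x n)⁻¹ * y n → 1`. -/
def EZeroRel (G : Type*) [Group G] [TopologicalSpace G] (x y : ℕ → G) : Prop :=
  Tendsto (fun n => (x n)⁻¹ * y n) atTop (𝓝 (1 : G))

/-- A topological group is TSI if it admits a compatible two-sided invariant metric. -/
def TSIGroup (G : Type*) [Group G] [t : TopologicalSpace G] : Prop :=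
  ∃ m : MetricSpace G, m.toUniformSpace.toTopologicalSpace = t ∧
    (∀ g h k : G, m.dist (g * h) (g * k) = m.dist h k) ∧
    (∀ g h k : G, m.dist (h * g) (k * g) = m.dist h k)

/-!
Interleave `x` with `x * z`: `θ (x, z) (2k) = x k` and `θ (x, z) (2k+1) = x k * z k`. The quotient
sequence of `θ (x, z)` and `θ (x', z')` then interleaves `x k * (x' k)⁻¹` with
`x k * z k * (x' k * z' k)⁻¹`, and a two-sided invariant metric puts these two terms exactly
`d (z k, z' k)` apart. So it converges iff `x k * (x' k)⁻¹` converges and `d (z k, z' k) → 0`,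
i.e. iff `x E(G) x'` and `z E(G;0) z'`.
-/

section Interleave

variable {α : Type*}

def interleave (a b : ℕ → α) (n : ℕ) : α :=
  if Even n then a (n / 2) else b (n / 2)

@[simp]
theorem interleave_two_mul (a b : ℕ → α) (k : ℕ) : interleave a b (2 * k) = a k := by
  simp [interleave]

@[simp]
theorem interleave_two_mul_add_one (a b : ℕ → α) (k : ℕ) :
    interleave a b (2 * k + 1) = b k := by
  simp [interleave, Nat.add_div_of_dvd_right]

theorem interleave_map₂ {β γ : Type*} (f : α → β → γ) (a b : ℕ → α) (a' b' : ℕ → β) (n : ℕ) :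
    f (interleave a b n) (interleave a' b' n) =
      interleave (fun k => f (a k) (a' k)) (fun k => f (b k) (b' k)) n := by
  unfold interleave
  split_ifs <;> rfl

theorem tendsto_interleave_iff {a b : ℕ → α} {l : Filter α} :
    Tendsto (interleave a b) atTop l ↔ Tendsto a atTop l ∧ Tendsto b atTop l := by
  refine ⟨fun h => ⟨?_, ?_⟩, fun ⟨ha, hb⟩ => ?_⟩
  · simpa [Function.comp_def] using
      h.comp (tendsto_atTop_mono (fun k => show k ≤ 2 * k by omega) tendsto_id)
  · simpa [Function.comp_def] using
      h.comp (tendsto_atTop_mono (fun k => show k ≤ 2 * k + 1 by omega) tendsto_id)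
  · have hhalf := Nat.tendsto_div_const_atTop two_ne_zero
    exact (ha.comp hhalf).if' (hb.comp hhalf)

theorem continuous_interleave [TopologicalSpace α] {X : Type*} [TopologicalSpace X]
    {f g : X → ℕ → α} (hf : Continuous f) (hg : Continuous g) :
    Continuous fun x => interleave (f x) (g x) := by
  refine continuous_pi fun n => ?_
  unfold interleave
  split_ifs
  exacts [(continuous_apply _).comp hf, (continuous_apply _).comp hg]

end Interleave

theorem exists_tendsto_and_tendsto_iff {ι α : Type*} [PseudoMetricSpace α] {l : Filter ι}
    {u v : ι → α} :
    (∃ g, Tendsto u l (𝓝 g) ∧ Tendsto v l (𝓝 g)) ↔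
      (∃ g, Tendsto u l (𝓝 g)) ∧ Tendsto (fun i => dist (u i) (v i)) l (𝓝 0) := by
  constructor
  · rintro ⟨g, hu, hv⟩
    exact ⟨⟨g, hu⟩, by simpa using hu.dist hv⟩
  · rintro ⟨⟨g, hu⟩, hdist⟩
    exact ⟨g, hu, hu.congr_dist hdist⟩

section TwoSidedInvariant

variable {G : Type*} [Group G] [PseudoMetricSpace G] [IsIsometricSMul G G]

theorem eZeroRel_iff_tendsto_dist {z z' : ℕ → G} :
    EZeroRel G z z' ↔ Tendsto (fun n => dist (z n) (z' n)) atTop (𝓝 0) := by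
  have hdist (n : ℕ) : dist ((z n)⁻¹ * z' n) 1 = dist (z n) (z' n) := by
    rw [← inv_mul_cancel (z n), dist_mul_left, dist_comm]
  rw [EZeroRel, tendsto_iff_dist_tendsto_zero]
  simp only [hdist]

variable [IsIsometricSMul Gᵐᵒᵖ G]

theorem dist_mul_inv_mul_mul_inv (x x' z z' : G) :
    dist (x * x'⁻¹) (x * z * (x' * z')⁻¹) = dist z' z := by
  rw [show x * x'⁻¹ = x * z' * (x' * z')⁻¹ by group, dist_mul_right, dist_mul_left]

theorem eRel_interleave_iff (x z x' z' : ℕ → G) :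
    ERel G (interleave x (x * z)) (interleave x' (x' * z')) ↔ ERel G x x' ∧ EZeroRel G z z' := by
  simp only [ERel, interleave_map₂ (fun g h => g * h⁻¹), Pi.mul_apply, tendsto_interleave_iff,
    exists_tendsto_and_tendsto_iff, dist_mul_inv_mul_mul_inv, eZeroRel_iff_tendsto_dist,
    dist_comm (z' _)]

end TwoSidedInvariant

theorem stmt14_general {G : Type*} [Group G] [TopologicalSpace G] [IsTopologicalGroup G]
    (htsi : TSIGroup G) :
    BorelReducible
      (fun p q : (ℕ → G) × (ℕ → G) => ERel G p.1 q.1 ∧ EZeroRel G p.2 q.2)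
      (ERel G) := by
  obtain ⟨m, rfl, hleft, hright⟩ := htsi
  let _ := m
  have : IsIsometricSMul G G := ⟨fun g => Isometry.of_dist_eq (hleft g)⟩
  have : IsIsometricSMul Gᵐᵒᵖ G := ⟨fun g => Isometry.of_dist_eq (hright g.unop)⟩
  refine ⟨fun p => interleave p.1 (p.1 * p.2), ?_, fun p q => (eRel_interleave_iff ..).symm⟩
  exact (continuous_interleave continuous_fst (continuous_fst.mul continuous_snd)).borel_measurable

/-- For a TSI Polish group `G`, the product relation `E(G) × E(G;0)` is Borel
reducible to `E(G)`. -/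
theorem stmt14 {G : Type*} [Group G] [TopologicalSpace G] [IsTopologicalGroup G] [PolishSpace G]
    (htsi : TSIGroup G) :
    BorelReducible
      (fun p q : (ℕ → G) × (ℕ → G) => ERel G p.1 q.1 ∧ EZeroRel G p.2 q.2)
      (ERel G) :=
  stmt14_general htsi
end
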